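/- arXiv:1611.01369 — 9 statements merged into one kernel-verified Lean document; each statement's English description precedes it below -/
import Mathlib

section
/- Theorem 2 (consistency of the non-marginal procedure): Assume the posterior convergence condition (C) and condition (A1). Then there exists N such that for every n ≥ N and every decision configuration d ∈ {0,1}^m with d ≠ d^t one has f_{β_n}(d^t) > f_{β_n}(d); in particular, for all sufficiently large n the true configuration d^t is the unique maximizer of f_{β_n} over {0,1}^m, i.e. d̂_n = d^t. -/
open Filter

/-- Theorem 2 (consistency of the non-marginal procedure). -/
theorem nonmarginal_consistency
    (m : ℕ) (hm : 1 ≤ m)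
    (dt : Fin m → Bool)
    (G : Fin m → Finset (Fin m)) (hG : ∀ i, i ∈ G i)
    (w : ℕ → Fin m → (Fin m → Bool) → ℝ)
    (hw : ∀ n i d, w n i d ∈ Set.Ioo (0:ℝ) 1)
    (β : ℕ → ℝ) (hβ : ∀ n, β n ∈ Set.Ioo (0:ℝ) 1)
    (hA1₁ : 0 < Filter.liminf β Filter.atTop)
    (hA1₂ : Filter.limsup β Filter.atTop < 1)
    (hC1 : ∀ (i : Fin m) (d : Fin m → Bool),
      (∀ j ∈ G i, d j = dt j) → Tendsto (fun n => w n i d) atTop (nhds 1))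
    (hC0 : ∀ (i : Fin m) (d : Fin m → Bool),
      (¬ ∀ j ∈ G i, d j = dt j) → Tendsto (fun n => w n i d) atTop (nhds 0)) :
    ∃ N : ℕ, ∀ n ≥ N,
      (∀ d : Fin m → Bool, d ≠ dt →
        (∑ i, if d i then w n i d - β n else 0) <
          (∑ i, if dt i then w n i dt - β n else 0)) ∧
      (∀ dhat : Fin m → Bool,
        (∀ d : Fin m → Bool,
          (∑ i, if d i then w n i d - β n else 0) ≤
            (∑ i, if dhat i then w n i dhat - β n else 0)) → dhat = dt) := by
  classical
  set a : ℝ := Filter.liminf β Filter.atTop / 2 with ha_def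
  have ha : 0 < a := by positivity
  set b : ℝ := (Filter.limsup β Filter.atTop + 1) / 2 with hb_def
  have hb : b < 1 := by rw [hb_def]; linarith
  set μ : ℝ := min a (1 - b) with hμ_def
  have hμ : 0 < μ := lt_min ha (by linarith)
  have hμa : μ ≤ a := min_le_left _ _
  have hμb : μ ≤ 1 - b := min_le_right _ _
  set ε : ℝ := μ / (2 * m + 2) with hε_def
  have hden : (0:ℝ) < 2 * m + 2 := by positivity
  have hε : 0 < ε := div_pos hμ hden
  have hkey : (2 * (m:ℝ) + 2) * ε = μ := by
    rw [hε_def]; field_simp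
  have hεμ : ε ≤ μ := by nlinarith [Nat.cast_nonneg (α := ℝ) m]
  -- eventual bounds on β
  have hβa : ∀ᶠ n in atTop, a < β n := by
    have hlt : a < Filter.liminf β Filter.atTop := by rw [ha_def]; linarith
    exact eventually_lt_of_lt_liminf hlt (Filter.isBoundedUnder_of ⟨0, fun n => (hβ n).1.le⟩)
  have hβb : ∀ᶠ n in atTop, β n < b := by
    have hlt : Filter.limsup β Filter.atTop < b := by rw [hb_def]; linarith
    exact eventually_lt_of_limsup_lt hlt (Filter.isBoundedUnder_of ⟨1, fun n => (hβ n).2.le⟩)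
  -- eventual bounds on w
  have hwall : ∀ᶠ n in atTop, ∀ (i : Fin m) (d : Fin m → Bool),
      ((∀ j ∈ G i, d j = dt j) → 1 - ε < w n i d) ∧
      ((¬ ∀ j ∈ G i, d j = dt j) → w n i d < ε) := by
    rw [eventually_all]
    intro i
    rw [eventually_all]
    intro d
    by_cases h : ∀ j ∈ G i, d j = dt j
    · have := (hC1 i d h).eventually (eventually_gt_nhds (show 1 - ε < 1 by linarith))
      exact this.mono fun n hn => ⟨fun _ => hn, fun hc => absurd h hc⟩
    · have := (hC0 i d h).eventually (eventually_lt_nhds hε)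
      exact this.mono fun n hn => ⟨fun hc => absurd hc h, fun _ => hn⟩
  obtain ⟨N, hN⟩ := eventually_atTop.mp ((hβa.and hβb).and hwall)
  refine ⟨N, fun n hn => ?_⟩
  obtain ⟨⟨hna, hnb⟩, hnw⟩ := hN n hn
  have key : ∀ d : Fin m → Bool, d ≠ dt →
      (∑ i, if d i then w n i d - β n else 0) <
        (∑ i, if dt i then w n i dt - β n else 0) := by
    intro d hd
    obtain ⟨j, hj⟩ : ∃ j, d j ≠ dt j := Function.ne_iff.mp hd
    set F : Fin m → ℝ := fun i =>
      (if dt i then w n i dt - β n else 0) - (if d i then w n i d - β n else 0) with hF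
    have hdt_lb : ∀ i : Fin m, 1 - ε < w n i dt := fun i =>
      (hnw i dt).1 (fun _ _ => rfl)
    have hdiff : ∀ i : Fin m, -ε ≤ F i := by
      intro i
      by_cases hi : ∀ k ∈ G i, d k = dt k
      · have hdi : d i = dt i := hi i (hG i)
        have h2 : w n i d < 1 := (hw n i d).2
        simp only [hF, hdi]
        cases hdt : dt i
        · simp; linarith
        · simp; linarith [hdt_lb i]
      · have h0 : w n i d < ε := (hnw i d).2 hi
        have h1 := hdt_lb i
        simp only [hF]
        cases hdt : dt i <;> cases hdd : d i <;> simp <;> linarith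
    have hjF : μ - ε ≤ F j := by
      have hjbad : ¬ ∀ k ∈ G j, d k = dt k := fun h => hj (h j (hG j))
      have h0 : w n j d < ε := (hnw j d).2 hjbad
      have h1 := hdt_lb j
      simp only [hF]
      cases hdt : dt j
      · have hdd : d j = true := by
          cases hdd : d j
          · exact absurd (hdd.trans hdt.symm) hj
          · rfl
        simp [hdd]; linarith
      · have hdd : d j = false := by
          cases hdd : d j
          · rfl
          · exact absurd (hdd.trans hdt.symm) hj
        simp [hdd]; linarith
    have hsplit : (∑ i, F i) = F j + ∑ i ∈ Finset.univ.erase j, F i :=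
      (Finset.add_sum_erase _ _ (Finset.mem_univ j)).symm
    have hrest : ∑ i ∈ Finset.univ.erase j, (-ε) ≤ ∑ i ∈ Finset.univ.erase j, F i :=
      Finset.sum_le_sum fun i _ => hdiff i
    have hcard : ((Finset.univ.erase j).card : ℝ) ≤ m := by
      have := Finset.card_le_card (Finset.erase_subset j Finset.univ)
      rw [Finset.card_univ, Fintype.card_fin] at this
      exact_mod_cast this
    have hconst : ∑ i ∈ Finset.univ.erase j, (-ε) = ((Finset.univ.erase j).card : ℝ) * (-ε) := by
      rw [Finset.sum_const, nsmul_eq_mul]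
    have hmul : (m:ℝ) * (-ε) ≤ ((Finset.univ.erase j).card : ℝ) * (-ε) := by
      apply mul_le_mul_of_nonpos_right hcard (by linarith)
    have hFpos : 0 < ∑ i, F i := by
      rw [hsplit]
      have : (μ - ε) + (m:ℝ) * (-ε) ≤ F j + ∑ i ∈ Finset.univ.erase j, F i := by
        apply add_le_add hjF
        calc (m:ℝ) * (-ε) ≤ ((Finset.univ.erase j).card : ℝ) * (-ε) := hmul
          _ = ∑ i ∈ Finset.univ.erase j, (-ε) := hconst.symm
          _ ≤ _ := hrest
      nlinarith
    have := Finset.sum_sub_distrib (s := Finset.univ)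
      (f := fun i => if dt i then w n i dt - β n else 0)
      (g := fun i => if d i then w n i d - β n else 0)
    simp only [hF] at hFpos
    rw [Finset.sum_sub_distrib] at hFpos
    linarith
  refine ⟨key, fun dhat hmax => ?_⟩
  by_contra hne
  have h1 := key dhat hne
  have h2 := hmax dt
  linarith
end

section
/- Lemma 1 (asymptotic bounds for the modified posterior FDR): Assume conditions (C) and (A1), assume d^t ≠ (0,…,0), and assume that for each i with d_i^t = 1 there is a constant K_i > 0 such that (1/n)·log(1 − w_{in}(d^t)) → −K_i as n → ∞. Let t = #{i : d_i^t = 1} and define mFDR_n = (Σ_{i=1}^m d̂_{n,i}(1 − w_{in}(d̂_n))) / max(Σ_{i=1}^m d̂_{n,i}, 1). Then for every ε > 0 there exists n₀ such that for all n ≥ n₀: e^{−nε} · (Σ_{i : d_i^t = 1} e^{−n K_i}) / t ≤ mFDR_n ≤ e^{nε} · (Σ_{i : d_i^t = 1} e^{−n K_i}) / t. -/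
/-!
Under (C) and (A1) the objective of every configuration `d ≠ dᵗ` ends up strictly below that of
`dᵗ`: with `T`, `D` the rejection sets of `dᵗ`, `d` and `S ⊆ T ∩ D` the rejections of `d` that are
correct on their group, the gap tends to `(|T| - |S|)(1 - β) + (|D| - |S|) β`, which is at least
`δ` once `β` stays in `[δ, 1 - δ]`. Since there are finitely many configurations, `d̂ₙ = dᵗ`
eventually, and then `mFDRₙ` is the average of `1 - w_{in}(dᵗ)` over `T`, each term of which is
`exp (-n (Kᵢ + o(1)))`.
-/

open Filter Finset Topology

lemma exists_pos_eventually_le_and_le_one_sub {ι : Type*} {l : Filter ι} {β : ι → ℝ}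
    (hlow : IsBoundedUnder (· ≥ ·) l β) (hup : IsBoundedUnder (· ≤ ·) l β)
    (hliminf : 0 < liminf β l) (hlimsup : limsup β l < 1) :
    ∃ δ > 0, ∀ᶠ n in l, δ ≤ β n ∧ β n ≤ 1 - δ := by
  refine ⟨min (liminf β l / 2) ((1 - limsup β l) / 2), lt_min (by linarith) (by linarith), ?_⟩
  filter_upwards [eventually_lt_of_lt_liminf (half_lt_self hliminf) hlow,
    eventually_lt_of_limsup_lt (show limsup β l < (limsup β l + 1) / 2 by linarith) hup]
    with n hlt hgt
  exact ⟨(min_le_left _ _).trans hlt.le,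
    by linarith [min_le_right (liminf β l / 2) ((1 - limsup β l) / 2)]⟩

lemma eventually_exp_mul_le_and_le_exp_mul {a : ℕ → ℝ} {K ε : ℝ} (ha : ∀ n, 0 < a n)
    (hK : Tendsto (fun n : ℕ => Real.log (a n) / n) atTop (𝓝 (-K))) (hε : 0 < ε) :
    ∀ᶠ n : ℕ in atTop, Real.exp (-(n : ℝ) * ε) * Real.exp (-(n : ℝ) * K) ≤ a n ∧
      a n ≤ Real.exp ((n : ℝ) * ε) * Real.exp (-(n : ℝ) * K) := by
  filter_upwards [hK.eventually (eventually_abs_sub_lt _ hε), eventually_gt_atTop 0]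
    with n hclose hn
  have hn : (0 : ℝ) < n := Nat.cast_pos.2 hn
  obtain ⟨hlow, hup⟩ := abs_lt.1 hclose
  have hlog : Real.log (a n) = Real.log (a n) / n * n := (div_mul_cancel₀ _ hn.ne').symm
  rw [← Real.exp_add, ← Real.exp_add, ← Real.le_log_iff_exp_le (ha n),
    ← Real.log_le_iff_le_exp (ha n), hlog]
  constructor <;> nlinarith

lemma eventually_exp_mul_sum_le_and_le {ι : Type*} (T : Finset ι) {a : ℕ → ι → ℝ} {K : ι → ℝ}
    {ε : ℝ} (ha : ∀ n, ∀ i ∈ T, 0 < a n i)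
    (hK : ∀ i ∈ T, Tendsto (fun n : ℕ => Real.log (a n i) / n) atTop (𝓝 (-K i))) (hε : 0 < ε) :
    ∀ᶠ n : ℕ in atTop,
      Real.exp (-(n : ℝ) * ε) * ∑ i ∈ T, Real.exp (-(n : ℝ) * K i) ≤ ∑ i ∈ T, a n i ∧
      ∑ i ∈ T, a n i ≤ Real.exp ((n : ℝ) * ε) * ∑ i ∈ T, Real.exp (-(n : ℝ) * K i) := by
  have hterm := (eventually_all_finset T).2 fun i hi =>
    eventually_exp_mul_le_and_le_exp_mul (ha · i hi) (hK i hi) hε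
  filter_upwards [hterm] with n hn
  rw [mul_sum, mul_sum]
  exact ⟨sum_le_sum fun i hi => (hn i hi).1, sum_le_sum fun i hi => (hn i hi).2⟩

lemma eventually_eq_of_forall_le_of_eventually_lt {α ι : Type*} [Finite α] {l : Filter ι}
    {f : ι → α → ℝ} {x : α} {xhat : ι → α} (hlt : ∀ y ≠ x, ∀ᶠ n in l, f n y < f n x)
    (hmax : ∀ n y, f n y ≤ f n (xhat n)) :
    ∀ᶠ n in l, xhat n = x := by
  have hall : ∀ᶠ n in l, ∀ y, y ≠ x → f n y < f n x :=
    eventually_all.2 fun y => eventually_imp_distrib_left.2 (hlt y)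
  filter_upwards [hall] with n hn
  by_contra hne
  exact (hmax n x).not_gt (hn _ hne)

lemma le_sub_mul_one_sub_add_sub_mul {s t k : ℕ} {δ b : ℝ} (hst : s ≤ t) (hsk : s ≤ k)
    (hlt : s < t ∨ s < k) (hδ : 0 ≤ δ) (hb₁ : δ ≤ b) (hb₂ : b ≤ 1 - δ) :
    δ ≤ ((t : ℝ) - s) * (1 - b) + ((k : ℝ) - s) * b := by
  have hst : (s : ℝ) ≤ t := by exact_mod_cast hst
  have hsk : (s : ℝ) ≤ k := by exact_mod_cast hsk
  rcases hlt with hlt | hlt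
  · have : (s : ℝ) + 1 ≤ t := by exact_mod_cast hlt
    nlinarith
  · have : (s : ℝ) + 1 ≤ k := by exact_mod_cast hlt
    nlinarith

section NonMarginal

variable {ι : Type*} [Fintype ι] (G : ι → Finset ι) (dt : ι → Bool)
  (w : ℕ → ι → (ι → Bool) → ℝ) (β : ℕ → ℝ)

def objective (n : ℕ) (d : ι → Bool) : ℝ :=
  ∑ i, if d i then w n i d - β n else 0

noncomputable def mFDR (n : ℕ) (d : ι → Bool) : ℝ :=
  (∑ i, if d i then 1 - w n i d else 0) / max (∑ i, if d i then (1 : ℝ) else 0) 1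

lemma objective_eq_sub (n : ℕ) (d : ι → Bool) :
    objective w β n d =
      (∑ i, if d i then w n i d else 0) - (#{i | d i = true} : ℝ) * β n := by
  simp only [objective, ← sum_filter, sum_sub_distrib, sum_const,
    nsmul_eq_mul]

variable {G dt w}

lemma tendsto_sum_weights
    (hC1 : ∀ i d, (∀ j ∈ G i, d j = dt j) → Tendsto (fun n => w n i d) atTop (𝓝 1))
    (hC0 : ∀ i d, (¬ ∀ j ∈ G i, d j = dt j) → Tendsto (fun n => w n i d) atTop (𝓝 0))
    (d : ι → Bool) :
    Tendsto (fun n => ∑ i, if d i then w n i d else 0) atTop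
      (𝓝 (#{i | d i = true ∧ ∀ j ∈ G i, d j = dt j} : ℝ)) := by
  rw [natCast_card_filter]
  refine tendsto_finsetSum _ fun i _ => ?_
  by_cases hdi : d i = true
  · by_cases hcorrect : ∀ j ∈ G i, d j = dt j
    · rw [if_pos ⟨hdi, hcorrect⟩]
      simpa only [hdi, if_true] using hC1 i d hcorrect
    · rw [if_neg fun h => hcorrect h.2]
      simpa only [hdi, if_true] using hC0 i d hcorrect
  · rw [if_neg fun h => hdi h.1]
    simp only [hdi]
    exact tendsto_const_nhds

lemma eventually_objective_lt_of_ne (hG : ∀ i, i ∈ G i)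
    (hC1 : ∀ i d, (∀ j ∈ G i, d j = dt j) → Tendsto (fun n => w n i d) atTop (𝓝 1))
    (hC0 : ∀ i d, (¬ ∀ j ∈ G i, d j = dt j) → Tendsto (fun n => w n i d) atTop (𝓝 0))
    {δ : ℝ} (hδ : 0 < δ) (hβ : ∀ᶠ n in atTop, δ ≤ β n ∧ β n ≤ 1 - δ)
    {d : ι → Bool} (hd : d ≠ dt) :
    ∀ᶠ n in atTop, objective w β n d < objective w β n dt := by
  set S : Finset ι := {i | d i = true ∧ ∀ j ∈ G i, d j = dt j}
  set T : Finset ι := {i | dt i = true}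
  set D : Finset ι := {i | d i = true}
  have hST : S ⊆ T := fun i hi => by
    simp only [S, T, mem_filter, mem_univ, true_and] at hi ⊢
    exact hi.2 i (hG i) ▸ hi.1
  have hSD : S ⊆ D := fun i hi => by
    simp only [S, D, mem_filter, mem_univ, true_and] at hi ⊢
    exact hi.1
  have hlt : #S < #T ∨ #S < #D := by
    by_contra! hle
    have hDT : D = T := (eq_of_subset_of_card_le hSD hle.2).symm.trans
      (eq_of_subset_of_card_le hST hle.1)
    refine hd (funext fun i => Bool.eq_iff_iff.2 ?_)
    simpa [D, T] using congrArg (i ∈ ·) hDT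
  have hT : #{i | dt i = true ∧ ∀ j ∈ G i, dt j = dt j} = #T := by simp [T]
  have hdt_lim := tendsto_sum_weights hC1 hC0 dt
  rw [hT] at hdt_lim
  filter_upwards [hβ, hdt_lim.eventually (eventually_gt_nhds (by linarith : (#T : ℝ) - δ / 2 < #T)),
    (tendsto_sum_weights hC1 hC0 d).eventually
      (eventually_lt_nhds (by linarith : (#S : ℝ) < #S + δ / 2))] with n hβn hdt_n hd_n
  have hgap := le_sub_mul_one_sub_add_sub_mul (card_le_card hST) (card_le_card hSD) hlt
    hδ.le hβn.1 hβn.2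
  rw [objective_eq_sub, objective_eq_sub]
  nlinarith

lemma mFDR_eq_of_nonempty {n : ℕ} {d : ι → Bool} (hd : ({i | d i = true} : Finset ι).Nonempty) :
    mFDR w n d = (∑ i ∈ {i | d i = true}, (1 - w n i d)) / #{i | d i = true} := by
  rw [mFDR, sum_filter, sum_boole,
    max_eq_left (Nat.one_le_cast.2 (card_pos.2 hd))]

end NonMarginal

theorem mFDR_asymptotic_bounds_general
    (m : ℕ)
    (dt : Fin m → Bool)
    (G : Fin m → Finset (Fin m)) (hG : ∀ i, i ∈ G i)
    (w : ℕ → Fin m → (Fin m → Bool) → ℝ)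
    (hw : ∀ n i d, w n i d ∈ Set.Ioo (0:ℝ) 1)
    (β : ℕ → ℝ) (hβ : ∀ n, β n ∈ Set.Ioo (0:ℝ) 1)
    (hA1₁ : 0 < Filter.liminf β Filter.atTop)
    (hA1₂ : Filter.limsup β Filter.atTop < 1)
    (hC1 : ∀ (i : Fin m) (d : Fin m → Bool),
      (∀ j ∈ G i, d j = dt j) → Tendsto (fun n => w n i d) atTop (nhds 1))
    (hC0 : ∀ (i : Fin m) (d : Fin m → Bool),
      (¬ ∀ j ∈ G i, d j = dt j) → Tendsto (fun n => w n i d) atTop (nhds 0))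
    (hdt : (Finset.univ.filter (fun i => dt i = true)).Nonempty)
    (K : Fin m → ℝ)
    (hK : ∀ i, dt i = true → 0 < K i ∧
      Tendsto (fun n : ℕ => Real.log (1 - w n i dt) / n) atTop (nhds (-(K i))))
    (dhat : ℕ → Fin m → Bool)
    (hdhat : ∀ n (d : Fin m → Bool),
      (∑ i, if d i then w n i d - β n else 0) ≤
        (∑ i, if dhat n i then w n i (dhat n) - β n else 0)) :
    ∀ ε > (0:ℝ), ∃ n₀ : ℕ, ∀ n ≥ n₀,
      Real.exp (-(n:ℝ) * ε) *
          (∑ i ∈ Finset.univ.filter (fun i => dt i = true), Real.exp (-(n:ℝ) * K i)) /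
          ((Finset.univ.filter (fun i => dt i = true)).card : ℝ)
        ≤ (∑ i, if dhat n i then 1 - w n i (dhat n) else 0) /
            max (∑ i, if dhat n i then (1:ℝ) else 0) 1 ∧
      (∑ i, if dhat n i then 1 - w n i (dhat n) else 0) /
            max (∑ i, if dhat n i then (1:ℝ) else 0) 1
        ≤ Real.exp ((n:ℝ) * ε) *
            (∑ i ∈ Finset.univ.filter (fun i => dt i = true), Real.exp (-(n:ℝ) * K i)) /
            ((Finset.univ.filter (fun i => dt i = true)).card : ℝ) := by
  intro ε hε
  obtain ⟨δ, hδ, hβδ⟩ := exists_pos_eventually_le_and_le_one_sub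
    (isBoundedUnder_of ⟨0, fun n => (hβ n).1.le⟩) (isBoundedUnder_of ⟨1, fun n => (hβ n).2.le⟩)
    hA1₁ hA1₂
  have hdhat_eq : ∀ᶠ n in atTop, dhat n = dt :=
    eventually_eq_of_forall_le_of_eventually_lt (f := objective w β) (x := dt)
      (fun d hd => eventually_objective_lt_of_ne β hG hC1 hC0 hδ hβδ hd) hdhat
  have hsum := eventually_exp_mul_sum_le_and_le {i | dt i = true}
    (fun n i _ => sub_pos.2 (hw n i dt).2) (fun i hi => (hK i (by simpa using hi)).2) hε
  obtain ⟨n₀, hn₀⟩ := eventually_atTop.1 (hdhat_eq.and hsum)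
  refine ⟨n₀, fun n hn => ?_⟩
  obtain ⟨hdn, hlow, hup⟩ := hn₀ n hn
  change _ ≤ mFDR w n (dhat n) ∧ mFDR w n (dhat n) ≤ _
  rw [hdn, mFDR_eq_of_nonempty hdt]
  exact ⟨div_le_div_of_nonneg_right hlow (Nat.cast_nonneg _),
    div_le_div_of_nonneg_right hup (Nat.cast_nonneg _)⟩

/-- Lemma 1 (asymptotic bounds for the modified posterior FDR). -/
theorem mFDR_asymptotic_bounds
    (m : ℕ) (hm : 1 ≤ m)
    (dt : Fin m → Bool)
    (G : Fin m → Finset (Fin m)) (hG : ∀ i, i ∈ G i)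
    (w : ℕ → Fin m → (Fin m → Bool) → ℝ)
    (hw : ∀ n i d, w n i d ∈ Set.Ioo (0:ℝ) 1)
    (β : ℕ → ℝ) (hβ : ∀ n, β n ∈ Set.Ioo (0:ℝ) 1)
    (hA1₁ : 0 < Filter.liminf β Filter.atTop)
    (hA1₂ : Filter.limsup β Filter.atTop < 1)
    (hC1 : ∀ (i : Fin m) (d : Fin m → Bool),
      (∀ j ∈ G i, d j = dt j) → Tendsto (fun n => w n i d) atTop (nhds 1))
    (hC0 : ∀ (i : Fin m) (d : Fin m → Bool),
      (¬ ∀ j ∈ G i, d j = dt j) → Tendsto (fun n => w n i d) atTop (nhds 0))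
    (hdt : (Finset.univ.filter (fun i => dt i = true)).Nonempty)
    (K : Fin m → ℝ)
    (hK : ∀ i, dt i = true → 0 < K i ∧
      Tendsto (fun n : ℕ => Real.log (1 - w n i dt) / n) atTop (nhds (-(K i))))
    (dhat : ℕ → Fin m → Bool)
    (hdhat : ∀ n (d : Fin m → Bool),
      (∑ i, if d i then w n i d - β n else 0) ≤
        (∑ i, if dhat n i then w n i (dhat n) - β n else 0)) :
    ∀ ε > (0:ℝ), ∃ n₀ : ℕ, ∀ n ≥ n₀,
      Real.exp (-(n:ℝ) * ε) *
          (∑ i ∈ Finset.univ.filter (fun i => dt i = true), Real.exp (-(n:ℝ) * K i)) /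
          ((Finset.univ.filter (fun i => dt i = true)).card : ℝ)
        ≤ (∑ i, if dhat n i then 1 - w n i (dhat n) else 0) /
            max (∑ i, if dhat n i then (1:ℝ) else 0) 1 ∧
      (∑ i, if dhat n i then 1 - w n i (dhat n) else 0) /
            max (∑ i, if dhat n i then (1:ℝ) else 0) 1
        ≤ Real.exp ((n:ℝ) * ε) *
            (∑ i ∈ Finset.univ.filter (fun i => dt i = true), Real.exp (-(n:ℝ) * K i)) /
            ((Finset.univ.filter (fun i => dt i = true)).card : ℝ) :=
  mFDR_asymptotic_bounds_general m dt G hG w hw β hβ hA1₁ hA1₂ hC1 hC0 hdt K hK dhat hdhat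
end

section
/- Theorem 3 (exact exponential convergence rates of the posterior FDR measures): Assume conditions (C) and (A1), assume d^t ≠ (0,…,0), and assume that for each i with d_i^t = 1 there are constants K_i > 0 and H_i > 0 such that (1/n)·log(1 − w_{in}(d^t)) → −K_i and (1/n)·log(1 − v_{in}) → −H_i as n → ∞. Let J_min = min{K_i : d_i^t = 1} and H_min = min{H_i : d_i^t = 1}, and define mFDR_n = (Σ_{i=1}^m d̂_{n,i}(1 − w_{in}(d̂_n))) / max(Σ_{i=1}^m d̂_{n,i}, 1) and FDR_n = (Σ_{i=1}^m d̂_{n,i}(1 − v_{in})) / max(Σ_{i=1}^m d̂_{n,i}, 1). Then (1/n)·log mFDR_n → −J_min and (1/n)·log FDR_n → −H_min as n → ∞. -/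
open Filter

lemma tendsto_finset_sup'' {ι α : Type*} {l : Filter α} (s : Finset ι) (hs : s.Nonempty)
    (f : ι → α → ℝ) (L : ι → ℝ)
    (hf : ∀ i ∈ s, Tendsto (f i) l (nhds (L i))) :
    Tendsto (fun n => s.sup' hs (fun i => f i n)) l (nhds (s.sup' hs L)) := by
  induction hs using Finset.Nonempty.cons_induction with
  | singleton i => simpa using hf i (by simp)
  | cons i s hi hne ih =>
    simp only [Finset.sup'_cons hne]
    exact (hf i (by simp)).max (ih fun j hj => hf j (by simp [hj]))

lemma log_sum_div_card {ι : Type*} (s : Finset ι) (hs : s.Nonempty)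
    (t : ℕ → ι → ℝ) (ht : ∀ n, ∀ i ∈ s, 0 < t n i)
    (L : ι → ℝ)
    (hL : ∀ i ∈ s, Tendsto (fun n : ℕ => Real.log (t n i) / n) atTop (nhds (L i))) :
    Tendsto (fun n : ℕ => Real.log ((∑ i ∈ s, t n i) / s.card) / n) atTop
      (nhds (s.sup' hs L)) := by
  have hcard : (0:ℝ) < s.card := by exact_mod_cast hs.card_pos
  have hsum : ∀ n, 0 < ∑ i ∈ s, t n i := fun n => Finset.sum_pos (ht n) hs
  have heq : ∀ n : ℕ, Real.log ((∑ i ∈ s, t n i) / s.card) / n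
      = Real.log (∑ i ∈ s, t n i) / n - Real.log s.card / n := by
    intro n
    rw [Real.log_div (hsum n).ne' hcard.ne']
    ring
  simp only [heq]
  have h2 : Tendsto (fun n : ℕ => Real.log s.card / n) atTop (nhds 0) :=
    tendsto_const_div_atTop_nhds_zero_nat _
  have key : Tendsto (fun n : ℕ => Real.log (∑ i ∈ s, t n i) / n) atTop (nhds (s.sup' hs L)) := by
    have hlow := tendsto_finset_sup'' s hs (fun i n => Real.log (t n i) / n) L hL
    refine tendsto_of_tendsto_of_tendsto_of_le_of_le'
      (g := fun n => s.sup' hs fun i => Real.log (t n i) / n)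
      (h := fun n => Real.log s.card / n + s.sup' hs fun i => Real.log (t n i) / n)
      hlow (by simpa using h2.add hlow) ?_ ?_
    · filter_upwards [eventually_ge_atTop 1] with n hn
      apply Finset.sup'_le
      intro i hi
      have : Real.log (t n i) ≤ Real.log (∑ j ∈ s, t n j) :=
        Real.log_le_log (ht n i hi) (Finset.single_le_sum (fun j hj => (ht n j hj).le) hi)
      exact div_le_div_of_nonneg_right this (by positivity) |>.trans_eq rfl
    · filter_upwards [eventually_ge_atTop 1] with n hn
      obtain ⟨i₀, hi₀, hmax⟩ := s.exists_mem_eq_sup' hs (fun i => t n i)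
      have hle : (∑ j ∈ s, t n j) ≤ s.card * t n i₀ := by
        rw [← hmax]
        calc (∑ j ∈ s, t n j) ≤ ∑ j ∈ s, s.sup' hs fun i => t n i :=
              Finset.sum_le_sum fun j hj => Finset.le_sup' _ hj
          _ = s.card * s.sup' hs fun i => t n i := by
              rw [Finset.sum_const, nsmul_eq_mul]
      have hnpos : (0:ℝ) < n := by exact_mod_cast hn
      have hlog : Real.log (∑ j ∈ s, t n j) ≤ Real.log s.card + Real.log (t n i₀) := by
        calc Real.log (∑ j ∈ s, t n j) ≤ Real.log (s.card * t n i₀) :=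
              Real.log_le_log (hsum n) hle
          _ = Real.log s.card + Real.log (t n i₀) :=
              Real.log_mul hcard.ne' (ht n i₀ hi₀).ne'
      calc Real.log (∑ j ∈ s, t n j) / n ≤ (Real.log s.card + Real.log (t n i₀)) / n :=
            div_le_div_of_nonneg_right ?_ hnpos.le
        _ = Real.log s.card / n + Real.log (t n i₀) / n := by ring
        _ ≤ Real.log s.card / n + s.sup' hs fun i => Real.log (t n i) / n := by
            gcongr
            exact Finset.le_sup' (fun i => Real.log (t n i) / n) hi₀
      exact hlog
  simpa using key.sub h2

lemma sup'_neg_eq {ι : Type*} (s : Finset ι) (hs : s.Nonempty) (K : ι → ℝ) :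
    s.sup' hs (fun i => -(K i)) = -(s.inf' hs K) := by
  apply le_antisymm
  · exact Finset.sup'_le _ _ fun i hi => neg_le_neg (Finset.inf'_le _ hi)
  · obtain ⟨i₀, hi₀, h⟩ := s.exists_mem_eq_inf' hs K
    rw [h]
    exact Finset.le_sup' (fun i => -(K i)) hi₀

/-- Theorem 3 (exact exponential convergence rates of the posterior FDR measures). -/
theorem FDR_convergence_rates
    (m : ℕ) (hm : 1 ≤ m)
    (dt : Fin m → Bool)
    (G : Fin m → Finset (Fin m)) (hG : ∀ i, i ∈ G i)
    (w : ℕ → Fin m → (Fin m → Bool) → ℝ)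
    (hw : ∀ n i d, w n i d ∈ Set.Ioo (0:ℝ) 1)
    (v : ℕ → Fin m → ℝ) (hv : ∀ n i, v n i ∈ Set.Ioo (0:ℝ) 1)
    (β : ℕ → ℝ) (hβ : ∀ n, β n ∈ Set.Ioo (0:ℝ) 1)
    (hA1₁ : 0 < Filter.liminf β Filter.atTop)
    (hA1₂ : Filter.limsup β Filter.atTop < 1)
    (hC1 : ∀ (i : Fin m) (d : Fin m → Bool),
      (∀ j ∈ G i, d j = dt j) → Tendsto (fun n => w n i d) atTop (nhds 1))
    (hC0 : ∀ (i : Fin m) (d : Fin m → Bool),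
      (¬ ∀ j ∈ G i, d j = dt j) → Tendsto (fun n => w n i d) atTop (nhds 0))
    (hdt : (Finset.univ.filter (fun i => dt i = true)).Nonempty)
    (K H : Fin m → ℝ)
    (hK : ∀ i, dt i = true → 0 < K i ∧
      Tendsto (fun n : ℕ => Real.log (1 - w n i dt) / n) atTop (nhds (-(K i))))
    (hH : ∀ i, dt i = true → 0 < H i ∧
      Tendsto (fun n : ℕ => Real.log (1 - v n i) / n) atTop (nhds (-(H i))))
    (dhat : ℕ → Fin m → Bool)
    (hdhat : ∀ n (d : Fin m → Bool),
      (∑ i, if d i then w n i d - β n else 0) ≤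
        (∑ i, if dhat n i then w n i (dhat n) - β n else 0)) :
    Tendsto (fun n : ℕ =>
        Real.log ((∑ i, if dhat n i then 1 - w n i (dhat n) else 0) /
          max (∑ i, if dhat n i then (1:ℝ) else 0) 1) / n) atTop
      (nhds (-((Finset.univ.filter (fun i => dt i = true)).inf' hdt K))) ∧
    Tendsto (fun n : ℕ =>
        Real.log ((∑ i, if dhat n i then 1 - v n i else 0) /
          max (∑ i, if dhat n i then (1:ℝ) else 0) 1) / n) atTop
      (nhds (-((Finset.univ.filter (fun i => dt i = true)).inf' hdt H))) := by
  classical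
  set T := Finset.univ.filter (fun i : Fin m => dt i = true) with hTdef
  have hTcard1 : 1 ≤ T.card := hdt.card_pos
  have hTm : T.card ≤ m := by
    rw [hTdef]
    simpa using Finset.card_filter_le Finset.univ (fun i : Fin m => dt i = true)
  -- Step A : bounds on β
  have hbddlo : IsBoundedUnder (· ≥ ·) atTop β :=
    isBoundedUnder_of ⟨0, fun n => (hβ n).1.le⟩
  have hbddhi : IsBoundedUnder (· ≤ ·) atTop β :=
    isBoundedUnder_of ⟨1, fun n => (hβ n).2.le⟩
  set ε := min (liminf β atTop / 2) ((1 - limsup β atTop) / 2) with hεdef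
  have hεpos : 0 < ε := lt_min (by linarith) (by linarith)
  have hβlo : ∀ᶠ n in atTop, ε ≤ β n := by
    have := eventually_lt_of_lt_liminf
      (show liminf β atTop / 2 < liminf β atTop by linarith) hbddlo
    filter_upwards [this] with n hn
    exact le_trans (min_le_left _ _) hn.le
  have hβhi : ∀ᶠ n in atTop, β n ≤ 1 - ε := by
    have := eventually_lt_of_limsup_lt
      (show limsup β atTop < (1 + limsup β atTop) / 2 by linarith) hbddhi
    filter_upwards [this] with n hn
    have h2 : ε ≤ (1 - limsup β atTop) / 2 := min_le_right _ _
    have := hn.le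
    linarith
  -- δ
  set δ := ε / (4 * m) with hδdef
  have hmpos : (0:ℝ) < m := by exact_mod_cast hm
  have hδpos : 0 < δ := by positivity
  -- Step B : eventual closeness
  have h1 : ∀ᶠ n in atTop, ∀ i ∈ T, 1 - δ ≤ w n i dt := by
    rw [eventually_all_finset]
    intro i hi
    exact (hC1 i dt (fun j _ => rfl)).eventually (eventually_ge_nhds (by linarith))
  have h0 : ∀ᶠ n in atTop, ∀ (d : Fin m → Bool) (i : Fin m),
      ¬(∀ j ∈ G i, d j = dt j) → w n i d ≤ δ := by
    rw [eventually_all]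
    intro d
    rw [eventually_all]
    intro i
    by_cases hcond : ∀ j ∈ G i, d j = dt j
    · exact Eventually.of_forall fun n h => absurd hcond h
    · filter_upwards [(hC0 i d hcond).eventually (eventually_le_nhds hδpos)] with n hn _
      exact hn
  -- Step C/D : eventually dhat n = dt
  have hmain : ∀ᶠ n in atTop, dhat n = dt := by
    filter_upwards [hβlo, hβhi, h1, h0] with n hlo hhi h1n h0n
    by_contra hne
    set d := dhat n with hd
    have hlt : (∑ i, if d i then w n i d - β n else 0) <
        (∑ i, if dt i then w n i dt - β n else 0) := by
      set A := Finset.univ.filter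
        (fun i : Fin m => d i = true ∧ ∀ j ∈ G i, d j = dt j) with hAdef
      set B := Finset.univ.filter
        (fun i : Fin m => d i = true ∧ ¬∀ j ∈ G i, d j = dt j) with hBdef
      have hAsubT : A ⊆ T := by
        intro i hi
        simp only [hAdef, Finset.mem_filter, Finset.mem_univ, true_and] at hi
        simp only [hTdef, Finset.mem_filter, Finset.mem_univ, true_and]
        rw [← hi.2 i (hG i)]
        exact hi.1
      -- decomposition of the objective at d
      have hsplit : (∑ i, if d i then w n i d - β n else 0)
          = (∑ i ∈ A, (w n i d - β n)) + (∑ i ∈ B, (w n i d - β n)) := by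
        rw [← Finset.sum_filter]
        rw [← Finset.sum_filter_add_sum_filter_not (Finset.univ.filter fun i => d i = true)
          (fun i => ∀ j ∈ G i, d j = dt j)]
        congr 1 <;> [skip; skip] <;> · congr 1; rw [Finset.filter_filter]
      have hAle : (∑ i ∈ A, (w n i d - β n)) ≤ A.card * (1 - β n) := by
        calc (∑ i ∈ A, (w n i d - β n)) ≤ ∑ _i ∈ A, (1 - β n) :=
              Finset.sum_le_sum fun i _ => by linarith [(hw n i d).2]
          _ = A.card * (1 - β n) := by rw [Finset.sum_const, nsmul_eq_mul]
      have hBle : (∑ i ∈ B, (w n i d - β n)) ≤ B.card * (δ - β n) := by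
        calc (∑ i ∈ B, (w n i d - β n)) ≤ ∑ i ∈ B, (δ - β n) := by
              refine Finset.sum_le_sum fun i hi => ?_
              simp only [hBdef, Finset.mem_filter, Finset.mem_univ, true_and] at hi
              linarith [h0n d i hi.2]
          _ = B.card * (δ - β n) := by rw [Finset.sum_const, nsmul_eq_mul]
      have hTge : (T.card : ℝ) * (1 - δ - β n) ≤ ∑ i ∈ T, (w n i dt - β n) := by
        calc (T.card : ℝ) * (1 - δ - β n) = ∑ _i ∈ T, (1 - δ - β n) := by
              rw [Finset.sum_const, nsmul_eq_mul]
          _ ≤ ∑ i ∈ T, (w n i dt - β n) :=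
              Finset.sum_le_sum fun i hi => by linarith [h1n i hi]
      have hTsum : (∑ i, if dt i then w n i dt - β n else 0) = ∑ i ∈ T, (w n i dt - β n) := by
        rw [hTdef, Finset.sum_filter]
      -- key combinatorial fact
      have hkey : A.card < T.card ∨ 1 ≤ B.card := by
        by_contra hcon
        push_neg at hcon
        obtain ⟨hAT, hB0⟩ := hcon
        have hAeq : A = T := Finset.eq_of_subset_of_card_le hAsubT hAT
        have hBempty : B = ∅ := Finset.card_eq_zero.mp (Nat.lt_one_iff.mp hB0)
        apply hne
        funext i
        by_cases hdi : d i = true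
        · by_cases hcond : ∀ j ∈ G i, d j = dt j
          · exact hcond i (hG i)
          · have : i ∈ B := by
              simp only [hBdef, Finset.mem_filter, Finset.mem_univ, true_and]
              exact ⟨hdi, hcond⟩
            rw [hBempty] at this
            exact absurd this (Finset.notMem_empty i)
        · by_cases hdti : dt i = true
          · have : i ∈ A := by
              rw [hAeq, hTdef]
              simp only [Finset.mem_filter, Finset.mem_univ, true_and]
              exact hdti
            simp only [hAdef, Finset.mem_filter, Finset.mem_univ, true_and] at this
            exact absurd this.1 hdi
          · rw [Bool.not_eq_true] at hdi hdti
            rw [hdi, hdti]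
      -- numeric conclusion
      have hAcard : (A.card : ℝ) ≤ T.card := by exact_mod_cast Finset.card_le_card hAsubT
      have hBm : (B.card : ℝ) ≤ m := by
        have : B.card ≤ Fintype.card (Fin m) := Finset.card_le_univ B
        rw [Fintype.card_fin] at this
        exact_mod_cast this
      have hTmR : (T.card : ℝ) ≤ m := by exact_mod_cast hTm
      have hT1 : (1:ℝ) ≤ T.card := by exact_mod_cast hTcard1
      have hkeyR : (1:ℝ) ≤ ((T.card : ℝ) - A.card) + B.card := by
        rcases hkey with h | h
        · have : (A.card : ℝ) + 1 ≤ T.card := by exact_mod_cast h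
          have hB0 : (0:ℝ) ≤ B.card := Nat.cast_nonneg _
          linarith
        · have : (1:ℝ) ≤ B.card := by exact_mod_cast h
          linarith
      rw [hsplit, hTsum]
      have hB0 : (0:ℝ) ≤ B.card := Nat.cast_nonneg _
      have hδm : ε = 4 * m * δ := by rw [hδdef]; field_simp
      nlinarith [mul_nonneg (sub_nonneg.mpr hAcard) (by linarith : (0:ℝ) ≤ 1 - β n - ε),
        mul_nonneg hB0 (by linarith : (0:ℝ) ≤ β n - ε),
        mul_le_mul_of_nonneg_right hTmR hδpos.le,
        mul_le_mul_of_nonneg_right hBm hδpos.le,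
        mul_le_mul_of_nonneg_right hkeyR hεpos.le,
        mul_pos hmpos hδpos]
    exact absurd (hdhat n dt) (not_le.mpr hlt)
  -- Step E : limits
  have hmaxcard : max ((T.card : ℝ)) 1 = (T.card : ℝ) := by
    rw [max_eq_left]
    exact_mod_cast hTcard1
  have hsumone : (∑ i, if dt i then (1:ℝ) else 0) = (T.card : ℝ) := by
    rw [Finset.sum_boole, hTdef]
  constructor
  · have hlim := log_sum_div_card T hdt (fun n i => 1 - w n i dt)
      (fun n i _ => by show (0:ℝ) < 1 - w n i dt; linarith [(hw n i dt).2]) (fun i => -(K i))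
      (fun i hi => (hK i (by simpa [hTdef] using hi)).2)
    rw [sup'_neg_eq] at hlim
    refine Tendsto.congr' ?_ hlim
    filter_upwards [hmain] with n hn
    rw [hn]
    have h1 : (∑ i, if dt i then 1 - w n i dt else 0) = ∑ i ∈ T, (1 - w n i dt) := by
      rw [hTdef, Finset.sum_filter]
    rw [h1, hsumone, hmaxcard]
  · have hlim := log_sum_div_card T hdt (fun n i => 1 - v n i)
      (fun n i _ => by show (0:ℝ) < 1 - v n i; linarith [(hv n i).2]) (fun i => -(H i))
      (fun i hi => (hH i (by simpa [hTdef] using hi)).2)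
    rw [sup'_neg_eq] at hlim
    refine Tendsto.congr' ?_ hlim
    filter_upwards [hmain] with n hn
    rw [hn]
    have h1 : (∑ i, if dt i then 1 - v n i else 0) = ∑ i ∈ T, (1 - v n i) := by
      rw [hTdef, Finset.sum_filter]
    rw [h1, hsumone, hmaxcard]
end

section
/- Theorem 5 (exact exponential convergence rate of the posterior FNR): Assume conditions (C) and (A1), assume d^t ≠ (1,…,1), and assume that for each i with d_i^t = 0 there is a constant H̃_i > 0 such that (1/n)·log v_{in} → −H̃_i as n → ∞. Define FNR_n = (Σ_{i=1}^m (1 − d̂_{n,i}) v_{in}) / max(Σ_{i=1}^m (1 − d̂_{n,i}), 1), where d̂_n is the non-marginal decision, and let H̃_min = min{H̃_i : d_i^t = 0}. Then (1/n)·log FNR_n → −H̃_min as n → ∞. -/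
open Filter Topology Real

/-!
Against the true configuration `dt`, every other configuration `d` loses a positive amount of the
objective in the limit: a false rejection contributes `w - β → -β`, a missed rejection forgoes
`w - β → 1 - β`, and (A1) keeps `β` eventually inside `[δ, 1 - δ]`. Hence the non-marginal decision
is eventually `dt`, and from then on the FNR is `(∑_{dt i = false} v i) / #{i | dt i = false}`.
Since `max v_i ≤ ∑ v_i ≤ 2 max v_i` for two terms, the exponential rate of a finite sum is the
slowest rate of its terms, and the constant denominator does not affect the rate.
-/

section LogRate

variable {α : Type*} {l : Filter α} {s : α → ℝ}

lemma log_add_le_log_two_add_max {x y : ℝ} (hx : 0 < x) (hy : 0 < y) :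
    log (x + y) ≤ log 2 + max (log x) (log y) := by
  rcases le_total x y with h | h
  · calc log (x + y) ≤ log (2 * y) := log_le_log (by positivity) (by linarith)
      _ = log 2 + log y := log_mul two_ne_zero hy.ne'
      _ ≤ log 2 + max (log x) (log y) := by gcongr; exact le_max_right _ _
  · calc log (x + y) ≤ log (2 * x) := log_le_log (by positivity) (by linarith)
      _ = log 2 + log x := log_mul two_ne_zero hx.ne'
      _ ≤ log 2 + max (log x) (log y) := by gcongr; exact le_max_left _ _

lemma tendsto_log_add_div {x y : α → ℝ} {a b : ℝ} (hs : Tendsto s l atTop)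
    (hx : ∀ t, 0 < x t) (hy : ∀ t, 0 < y t)
    (ha : Tendsto (fun t => log (x t) / s t) l (𝓝 a))
    (hb : Tendsto (fun t => log (y t) / s t) l (𝓝 b)) :
    Tendsto (fun t => log (x t + y t) / s t) l (𝓝 (max a b)) := by
  have hlower := ha.max hb
  have hupper : Tendsto (fun t => log 2 / s t + max (log (x t) / s t) (log (y t) / s t)) l
      (𝓝 (max a b)) := by
    simpa using (tendsto_const_nhds.div_atTop hs).add hlower
  refine tendsto_of_tendsto_of_tendsto_of_le_of_le' hlower hupper ?_ ?_
  all_goals filter_upwards [hs.eventually_gt_atTop 0] with t hst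
  · exact max_le (div_le_div_of_nonneg_right (log_le_log (hx t) (by linarith [hy t])) hst.le)
      (div_le_div_of_nonneg_right (log_le_log (hy t) (by linarith [hx t])) hst.le)
  · rw [max_div_div_right hst.le, ← add_div]
    gcongr
    exact log_add_le_log_two_add_max (hx t) (hy t)

lemma tendsto_log_sum_div {ι : Type*} {S : Finset ι} (hS : S.Nonempty) {x : ι → α → ℝ}
    {H : ι → ℝ} (hs : Tendsto s l atTop) (hx : ∀ i t, 0 < x i t)
    (hH : ∀ i ∈ S, Tendsto (fun t => log (x i t) / s t) l (𝓝 (-H i))) :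
    Tendsto (fun t => log (∑ i ∈ S, x i t) / s t) l (𝓝 (-S.inf' hS H)) := by
  induction hS using Finset.Nonempty.cons_induction with
  | singleton i => simpa using hH i (Finset.mem_singleton_self i)
  | cons i S hi hS ih =>
    simp only [Finset.sum_cons]
    rw [Finset.inf'_cons hS, neg_inf]
    exact tendsto_log_add_div hs (hx i) (fun t => Finset.sum_pos (fun j _ => hx j t) hS)
      (hH i (Finset.mem_cons_self i S)) (ih fun j hj => hH j (Finset.mem_cons_of_mem hj))

end LogRate

lemma eventually_eq_of_isMax_of_eventually_lt {α γ : Type*} [Finite γ] {l : Filter α}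
    {f : α → γ → ℝ} {x : γ} {xhat : α → γ} (hmax : ∀ t y, f t y ≤ f t (xhat t))
    (hlt : ∀ y ≠ x, ∀ᶠ t in l, f t y < f t x) : ∀ᶠ t in l, xhat t = x := by
  have hall : ∀ᶠ t in l, ∀ y, y ≠ x → f t y < f t x :=
    eventually_all.2 fun y => by
      by_cases hy : y = x
      · exact Eventually.of_forall fun _ h => absurd hy h
      · exact (hlt y hy).mono fun _ h _ => h
  filter_upwards [hall] with t ht
  by_contra hne
  exact (hmax t x).not_gt (ht _ hne)

lemma exists_eventually_mem_Icc_of_liminf_pos {β : ℕ → ℝ} (hβ : ∀ n, β n ∈ Set.Ioo (0:ℝ) 1)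
    (hinf : 0 < liminf β atTop) (hsup : limsup β atTop < 1) :
    ∃ δ > 0, ∀ᶠ n in atTop, β n ∈ Set.Icc δ (1 - δ) := by
  obtain ⟨a, ha, hainf⟩ := exists_between hinf
  obtain ⟨b, hbsup, hb⟩ := exists_between hsup
  have hlow : ∀ᶠ n in atTop, a < β n :=
    eventually_lt_of_lt_liminf hainf (isBoundedUnder_of ⟨0, fun n => (hβ n).1.le⟩)
  have hup : ∀ᶠ n in atTop, β n < b :=
    eventually_lt_of_limsup_lt hbsup (isBoundedUnder_of ⟨1, fun n => (hβ n).2.le⟩)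
  refine ⟨min a (1 - b), lt_min ha (by linarith), ?_⟩
  filter_upwards [hlow, hup] with n hn₁ hn₂
  constructor <;> linarith [min_le_left a (1 - b), min_le_right a (1 - b)]

section NonMarginal

variable {ι : Type*}

def nonmarginalGain (w : ι → (ι → Bool) → ℝ) (β : ℝ) (d : ι → Bool) (i : ι) : ℝ :=
  if d i then w i d - β else 0

def nonmarginalScore [Fintype ι] (w : ι → (ι → Bool) → ℝ) (β : ℝ) (d : ι → Bool) : ℝ :=
  ∑ i, nonmarginalGain w β d i

variable {w : ℕ → ι → (ι → Bool) → ℝ} {β : ℕ → ℝ} {δ : ℝ} {d dt : ι → Bool}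

lemma exists_tendsto_le_nonmarginalGain_sub (hw : ∀ n i d, w n i d ≤ 1) (hδ : 0 ≤ δ)
    (hβ : ∀ᶠ n in atTop, β n ∈ Set.Icc δ (1 - δ))
    (hwt : ∀ i, Tendsto (fun n => w n i dt) atTop (𝓝 1))
    (hwd : ∀ i, d i ≠ dt i → Tendsto (fun n => w n i d) atTop (𝓝 0)) (i : ι) :
    ∃ L : ℕ → ℝ, ∃ c, Tendsto L atTop (𝓝 c) ∧ 0 ≤ c ∧ (d i ≠ dt i → δ ≤ c) ∧
      ∀ᶠ n in atTop, L n ≤ nonmarginalGain (w n) (β n) dt i - nonmarginalGain (w n) (β n) d i := by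
  have hβ' : ∀ᶠ n in atTop, δ ≤ β n ∧ β n ≤ 1 - δ := hβ
  simp only [nonmarginalGain]
  cases hdi : d i <;> cases hti : dt i
  · exact ⟨0, 0, tendsto_const_nhds, le_rfl, by simp, .of_forall fun _ => by simp⟩
  · refine ⟨fun n => w n i dt - (1 - δ), δ, by simpa using (hwt i).sub_const (1 - δ), hδ,
      fun _ => le_rfl, ?_⟩
    filter_upwards [hβ'] with n hn
    simp only [↓reduceIte, Bool.false_eq_true]
    linarith
  · refine ⟨fun n => δ - w n i d, δ, by simpa using (hwd i (by simp [hdi, hti])).const_sub δ,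
      hδ, fun _ => le_rfl, ?_⟩
    filter_upwards [hβ'] with n hn
    simp only [↓reduceIte, Bool.false_eq_true]
    linarith
  · refine ⟨fun n => w n i dt - 1, 0, by simpa using (hwt i).sub_const 1, le_rfl, by simp, ?_⟩
    filter_upwards with n
    simp only [↓reduceIte]
    linarith [hw n i d]

lemma eventually_nonmarginalScore_lt [Fintype ι] (hw : ∀ n i d, w n i d ≤ 1) (hδ : 0 < δ)
    (hβ : ∀ᶠ n in atTop, β n ∈ Set.Icc δ (1 - δ))
    (hwt : ∀ i, Tendsto (fun n => w n i dt) atTop (𝓝 1))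
    (hwd : ∀ i, d i ≠ dt i → Tendsto (fun n => w n i d) atTop (𝓝 0)) (hd : d ≠ dt) :
    ∀ᶠ n in atTop, nonmarginalScore (w n) (β n) d < nonmarginalScore (w n) (β n) dt := by
  choose L c hL hc0 hcδ hLle using exists_tendsto_le_nonmarginalGain_sub hw hδ.le hβ hwt hwd
  obtain ⟨j, hj⟩ := Function.ne_iff.mp hd
  have hc : 0 < ∑ i, c i :=
    Finset.sum_pos' (fun i _ => hc0 i) ⟨j, Finset.mem_univ j, hδ.trans_le (hcδ j hj)⟩
  filter_upwards [(tendsto_finsetSum _ fun i _ => hL i).eventually_const_lt hc,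
    eventually_all.2 hLle] with n hpos hle
  rw [← sub_pos, nonmarginalScore, nonmarginalScore, ← Finset.sum_sub_distrib]
  exact hpos.trans_le (Finset.sum_le_sum fun i _ => hle i)

end NonMarginal

theorem FNR_convergence_rate_general
    (m : ℕ)
    (dt : Fin m → Bool)
    (G : Fin m → Finset (Fin m)) (hG : ∀ i, i ∈ G i)
    (w : ℕ → Fin m → (Fin m → Bool) → ℝ)
    (hw : ∀ n i d, w n i d ∈ Set.Ioo (0:ℝ) 1)
    (v : ℕ → Fin m → ℝ) (hv : ∀ n i, v n i ∈ Set.Ioo (0:ℝ) 1)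
    (β : ℕ → ℝ) (hβ : ∀ n, β n ∈ Set.Ioo (0:ℝ) 1)
    (hA1₁ : 0 < Filter.liminf β Filter.atTop)
    (hA1₂ : Filter.limsup β Filter.atTop < 1)
    (hC1 : ∀ (i : Fin m) (d : Fin m → Bool),
      (∀ j ∈ G i, d j = dt j) → Tendsto (fun n => w n i d) atTop (nhds 1))
    (hC0 : ∀ (i : Fin m) (d : Fin m → Bool),
      (¬ ∀ j ∈ G i, d j = dt j) → Tendsto (fun n => w n i d) atTop (nhds 0))
    (hdt : (Finset.univ.filter (fun i => dt i = false)).Nonempty)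
    (Ht : Fin m → ℝ)
    (hHt : ∀ i, dt i = false → 0 < Ht i ∧
      Tendsto (fun n : ℕ => Real.log (v n i) / n) atTop (nhds (-(Ht i))))
    (dhat : ℕ → Fin m → Bool)
    (hdhat : ∀ n (d : Fin m → Bool),
      (∑ i, if d i then w n i d - β n else 0) ≤
        (∑ i, if dhat n i then w n i (dhat n) - β n else 0)) :
    Tendsto (fun n : ℕ =>
        Real.log ((∑ i, if dhat n i then 0 else v n i) /
          max (∑ i, if dhat n i then 0 else (1:ℝ)) 1) / n) atTop
      (nhds (-((Finset.univ.filter (fun i => dt i = false)).inf' hdt Ht))) := by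
  obtain ⟨δ, hδ, hβδ⟩ := exists_eventually_mem_Icc_of_liminf_pos hβ hA1₁ hA1₂
  have hcons : ∀ᶠ n in atTop, dhat n = dt :=
    eventually_eq_of_isMax_of_eventually_lt (f := fun n => nonmarginalScore (w n) (β n)) hdhat
      fun d hd => eventually_nonmarginalScore_lt (fun n i d => (hw n i d).2.le) hδ hβδ
        (fun i => hC1 i dt fun _ _ => rfl) (fun i hi => hC0 i d fun h => hi (h i (hG i))) hd
  set S := Finset.univ.filter (fun i => dt i = false)
  have hS : Tendsto (fun n : ℕ => log (∑ i ∈ S, v n i) / n) atTop (𝓝 (-S.inf' hdt Ht)) :=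
    tendsto_log_sum_div hdt tendsto_natCast_atTop_atTop (fun i n => (hv n i).1)
      fun i hi => (hHt i (Finset.mem_filter.1 hi).2).2
  have hFNR := hS.sub (tendsto_const_div_atTop_nhds_zero_nat (log S.card))
  rw [sub_zero] at hFNR
  refine hFNR.congr' ?_
  filter_upwards [hcons] with n hn
  have hsum (x : Fin m → ℝ) : (∑ i, if dt i then 0 else x i) = ∑ i ∈ S, x i := by
    rw [Finset.sum_filter]
    exact Finset.sum_congr rfl fun i _ => by cases dt i <;> rfl
  have hcard : (1:ℝ) ≤ S.card := by exact_mod_cast hdt.card_pos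
  rw [hn, hsum, hsum, Finset.sum_const, nsmul_one, max_eq_left hcard,
    log_div (Finset.sum_pos (fun i _ => (hv n i).1) hdt).ne' (by positivity), sub_div]

/-- Theorem 5 (exact exponential convergence rate of the posterior FNR). -/
theorem FNR_convergence_rate
    (m : ℕ) (hm : 1 ≤ m)
    (dt : Fin m → Bool)
    (G : Fin m → Finset (Fin m)) (hG : ∀ i, i ∈ G i)
    (w : ℕ → Fin m → (Fin m → Bool) → ℝ)
    (hw : ∀ n i d, w n i d ∈ Set.Ioo (0:ℝ) 1)
    (v : ℕ → Fin m → ℝ) (hv : ∀ n i, v n i ∈ Set.Ioo (0:ℝ) 1)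
    (β : ℕ → ℝ) (hβ : ∀ n, β n ∈ Set.Ioo (0:ℝ) 1)
    (hA1₁ : 0 < Filter.liminf β Filter.atTop)
    (hA1₂ : Filter.limsup β Filter.atTop < 1)
    (hC1 : ∀ (i : Fin m) (d : Fin m → Bool),
      (∀ j ∈ G i, d j = dt j) → Tendsto (fun n => w n i d) atTop (nhds 1))
    (hC0 : ∀ (i : Fin m) (d : Fin m → Bool),
      (¬ ∀ j ∈ G i, d j = dt j) → Tendsto (fun n => w n i d) atTop (nhds 0))
    (hdt : (Finset.univ.filter (fun i => dt i = false)).Nonempty)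
    (Ht : Fin m → ℝ)
    (hHt : ∀ i, dt i = false → 0 < Ht i ∧
      Tendsto (fun n : ℕ => Real.log (v n i) / n) atTop (nhds (-(Ht i))))
    (dhat : ℕ → Fin m → Bool)
    (hdhat : ∀ n (d : Fin m → Bool),
      (∑ i, if d i then w n i d - β n else 0) ≤
        (∑ i, if dhat n i then w n i (dhat n) - β n else 0)) :
    Tendsto (fun n : ℕ =>
        Real.log ((∑ i, if dhat n i then 0 else v n i) /
          max (∑ i, if dhat n i then 0 else (1:ℝ)) 1) / n) atTop
      (nhds (-((Finset.univ.filter (fun i => dt i = false)).inf' hdt Ht))) :=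
  FNR_convergence_rate_general m dt G hG w hw v hv β hβ hA1₁ hA1₂ hC1 hC0 hdt Ht hHt dhat hdhat
end

section
/- Abstract α-control theorem (the analytic core of Theorem 8, Corollary 3, Theorem 9 and Theorem 10): Let α > 0 and let F_n : [0,1] → [0,1] be a sequence of continuous, non-increasing functions such that F_n(0) → E as n → ∞ for some E > α, and such that for every sequence b_n ∈ [0,1] with liminf_n b_n > 0 one has F_n(b_n) → 0. Then there exists a sequence β_n ∈ [0,1] with β_n → 0 such that F_n(β_n) = α for all sufficiently large n; in particular F_n(β_n) → α. -/
open Filter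

/-- Abstract α-control theorem. -/
theorem alpha_control
    (α E : ℝ) (hα : 0 < α) (hE : α < E)
    (F : ℕ → ℝ → ℝ)
    (hFc : ∀ n, ContinuousOn (F n) (Set.Icc 0 1))
    (hFmono : ∀ n, AntitoneOn (F n) (Set.Icc 0 1))
    (hFrange : ∀ n, ∀ x ∈ Set.Icc (0:ℝ) 1, F n x ∈ Set.Icc (0:ℝ) 1)
    (hF0 : Tendsto (fun n => F n 0) atTop (nhds E))
    (hFto0 : ∀ b : ℕ → ℝ, (∀ n, b n ∈ Set.Icc (0:ℝ) 1) →
      0 < Filter.liminf b Filter.atTop →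
      Tendsto (fun n => F n (b n)) atTop (nhds 0)) :
    ∃ β : ℕ → ℝ, (∀ n, β n ∈ Set.Icc (0:ℝ) 1) ∧
      Tendsto β atTop (nhds 0) ∧
      (∀ᶠ n in atTop, F n (β n) = α) ∧
      Tendsto (fun n => F n (β n)) atTop (nhds α) := by
  classical
  -- F n 1 → 0
  have h1 : Tendsto (fun n => F n 1) atTop (nhds 0) := by
    apply hFto0 (fun _ => 1) (fun n => by norm_num)
    simp [Filter.liminf_const]
  have hev0 : ∀ᶠ n in atTop, α < F n 0 := hF0.eventually (eventually_gt_nhds hE)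
  have hev1 : ∀ᶠ n in atTop, F n 1 < α := h1.eventually (eventually_lt_nhds hα)
  -- solution sets
  set S : ℕ → Set ℝ := fun n => Set.Icc 0 1 ∩ (F n) ⁻¹' {α} with hS
  have hSclosed : ∀ n, IsClosed (S n) := fun n =>
    (hFc n).preimage_isClosed_of_isClosed isClosed_Icc isClosed_singleton
  have hScompact : ∀ n, IsCompact (S n) := fun n =>
    isCompact_Icc.of_isClosed_subset (hSclosed n) Set.inter_subset_left
  set β : ℕ → ℝ := fun n => if h : (S n).Nonempty then sInf (S n) else 0 with hβ
  have hβmem : ∀ n, (S n).Nonempty → β n ∈ S n := by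
    intro n hn
    simp only [hβ, dif_pos hn]
    exact (hScompact n).sInf_mem hn
  have hβIcc : ∀ n, β n ∈ Set.Icc (0:ℝ) 1 := by
    intro n
    by_cases hn : (S n).Nonempty
    · exact (hβmem n hn).1
    · simp only [hβ, dif_neg hn]; norm_num
  -- eventual nonemptiness
  have hevS : ∀ᶠ n in atTop, (S n).Nonempty := by
    filter_upwards [hev0, hev1] with n h0 h1'
    have := intermediate_value_Icc' (by norm_num : (0:ℝ) ≤ 1) (hFc n)
    have hαmem : α ∈ Set.Icc (F n 1) (F n 0) := ⟨le_of_lt h1', le_of_lt h0⟩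
    obtain ⟨x, hx, hfx⟩ := this hαmem
    exact ⟨x, hx, hfx⟩
  have hevEq : ∀ᶠ n in atTop, F n (β n) = α := by
    filter_upwards [hevS] with n hn
    exact (hβmem n hn).2
  -- β → 0
  have hβ0 : Tendsto β atTop (nhds 0) := by
    by_contra hcon
    rw [Metric.tendsto_atTop] at hcon
    push_neg at hcon
    obtain ⟨ε, hε, hfreq⟩ := hcon
    set ε' : ℝ := min ε 1 with hε'
    have hε'pos : 0 < ε' := lt_min hε one_pos
    have hε'le : ε' ≤ 1 := min_le_right _ _
    set b : ℕ → ℝ := fun n => max (β n) ε' with hb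
    have hbIcc : ∀ n, b n ∈ Set.Icc (0:ℝ) 1 :=
      fun n => ⟨le_max_of_le_right hε'pos.le, max_le (hβIcc n).2 hε'le⟩
    have hbliminf : 0 < Filter.liminf b Filter.atTop := by
      have hbd : IsBoundedUnder (· ≤ ·) atTop b :=
        ⟨1, eventually_map.2 (Eventually.of_forall fun n => (hbIcc n).2)⟩
      have : ε' ≤ Filter.liminf b Filter.atTop :=
        le_liminf_of_le hbd.isCoboundedUnder_ge
          (Eventually.of_forall fun n => le_max_right _ _)
      linarith
    have htend := hFto0 b hbIcc hbliminf
    have hsmall : ∀ᶠ n in atTop, F n (b n) < α :=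
      htend.eventually (eventually_lt_nhds hα)
    obtain ⟨n, ⟨hFn, heq⟩, hdist⟩ := ((hsmall.and hevEq).and_frequently
      (frequently_atTop.2 fun N => by
        obtain ⟨n, hn1, hn2⟩ := hfreq N; exact ⟨n, hn1, hn2⟩)).exists
    have hβge : ε' ≤ β n := by
      have : dist (β n) 0 = β n := by
        rw [Real.dist_eq, sub_zero, abs_of_nonneg (hβIcc n).1]
      rw [this] at hdist
      exact le_trans (min_le_left _ _) hdist |>.trans_eq rfl
    have hbn : b n = β n := max_eq_left hβge
    rw [hbn, heq] at hFn
    exact lt_irrefl _ hFn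
  refine ⟨β, hβIcc, hβ0, hevEq, ?_⟩
  exact Tendsto.congr' (hevEq.mono fun n h => h.symm) tendsto_const_nhds
end

section
/- Theorem 7 (upper-boundary case, disjoint singleton true-null groups): Suppose 1 ≤ m_1 < m, suppose the group membership is symmetric (j ∈ G_i if and only if i ∈ G_j), suppose G_i ⊆ {1,…,m_1} for every i ≤ m_1 and each such G_i contains at least one index k with d_k^t = 1, and suppose G_i = {i} with d_i^t = 0 for every i with m_1 < i ≤ m. Assume: for every i ≤ m_1, w_{in}(d) → 0 for all d ∈ D_i^c and w_{in}(d) → 1 for all d ∈ D_i; and for every i > m_1, w_{in}(d) does not depend on d, equals some v_{in} ∈ (0,1), and v_{in} → 0 as n → ∞. Let d̂_n be a maximizer of Σ_{i=1}^m d_i w_{in}(d) over d ∈ {0,1}^m (the non-marginal rule with β = 0). Then for all sufficiently large n, d̂_{n,i} = d_i^t for every i ≤ m_1 and d̂_{n,i} = 1 for every i > m_1, and consequently (Σ_{i=1}^m d̂_{n,i}(1 − w_{in}(d̂_n))) / (Σ_{i=1}^m d̂_{n,i}) → (m − m_1) / (Σ_{i=1}^m d_i^t + m − m_1) as n → ∞.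 -/
open Filter

/-- Theorem 7 (upper-boundary case, disjoint singleton true-null groups). -/
theorem max_mFDR_upper_boundary
    (m m₁ : ℕ) (hm₁ : 1 ≤ m₁) (hm : m₁ < m)
    (dt : Fin m → Bool)
    (G : Fin m → Finset (Fin m)) (hGmem : ∀ i, i ∈ G i)
    (hGsym : ∀ i j, j ∈ G i ↔ i ∈ G j)
    (hGlow : ∀ i : Fin m, (i:ℕ) < m₁ → ∀ j ∈ G i, (j:ℕ) < m₁)
    (hGfalse : ∀ i : Fin m, (i:ℕ) < m₁ → ∃ k ∈ G i, dt k = true)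
    (hGhigh : ∀ i : Fin m, m₁ ≤ (i:ℕ) → G i = {i})
    (hdthigh : ∀ i : Fin m, m₁ ≤ (i:ℕ) → dt i = false)
    (w : ℕ → Fin m → (Fin m → Bool) → ℝ)
    (hw : ∀ n i d, w n i d ∈ Set.Ioo (0:ℝ) 1)
    (hdep : ∀ n i (d d' : Fin m → Bool), (∀ j ∈ G i, d j = d' j) → w n i d = w n i d')
    (hC1 : ∀ i : Fin m, (i:ℕ) < m₁ → ∀ d : Fin m → Bool,
      (∀ j ∈ G i, d j = dt j) → Tendsto (fun n => w n i d) atTop (nhds 1))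
    (hC0 : ∀ i : Fin m, (i:ℕ) < m₁ → ∀ d : Fin m → Bool,
      (¬ ∀ j ∈ G i, d j = dt j) → Tendsto (fun n => w n i d) atTop (nhds 0))
    (v : ℕ → Fin m → ℝ)
    (hveq : ∀ n (i : Fin m), m₁ ≤ (i:ℕ) → ∀ d : Fin m → Bool, w n i d = v n i)
    (hv01 : ∀ n (i : Fin m), m₁ ≤ (i:ℕ) → v n i ∈ Set.Ioo (0:ℝ) 1)
    (hv0 : ∀ i : Fin m, m₁ ≤ (i:ℕ) → Tendsto (fun n => v n i) atTop (nhds 0))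
    (dhat : ℕ → Fin m → Bool)
    (hdhat : ∀ n (d : Fin m → Bool),
      (∑ i, if d i then w n i d else 0) ≤
        (∑ i, if dhat n i then w n i (dhat n) else 0)) :
    (∃ N : ℕ, ∀ n ≥ N,
      (∀ i : Fin m, (i:ℕ) < m₁ → dhat n i = dt i) ∧
      (∀ i : Fin m, m₁ ≤ (i:ℕ) → dhat n i = true)) ∧
    Tendsto (fun n =>
        (∑ i, if dhat n i then 1 - w n i (dhat n) else 0) /
          (∑ i, if dhat n i then (1:ℝ) else 0)) atTop
      (nhds (((m:ℝ) - (m₁:ℝ)) /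
        (((Finset.univ.filter fun i => dt i = true).card : ℝ) + ((m:ℝ) - (m₁:ℝ))))) := by
  classical
  set t : ℕ := (Finset.univ.filter fun i => dt i = true).card with ht
  set ds : Fin m → Bool := fun i => if (i:ℕ) < m₁ then dt i else true with hds
  have hdslow : ∀ i : Fin m, (i:ℕ) < m₁ → ds i = dt i := fun i hi => by simp [hds, hi]
  have hdshigh : ∀ i : Fin m, m₁ ≤ (i:ℕ) → ds i = true := fun i hi => by
    simp [hds, Nat.not_lt.mpr hi]
  have hdsmatch : ∀ i : Fin m, (i:ℕ) < m₁ → ∀ j ∈ G i, ds j = dt j := fun i hi j hj =>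
    hdslow j (hGlow i hi j hj)
  -- Step 1: every high coordinate of dhat n is true, for all n
  have hhigh : ∀ n (i : Fin m), m₁ ≤ (i:ℕ) → dhat n i = true := by
    intro n i hi
    by_contra hfalse
    have hfalse' : dhat n i = false := by
      cases h : dhat n i
      · rfl
      · exact absurd h hfalse
    set d' : Fin m → Bool := Function.update (dhat n) i true with hd'
    have hterm : ∀ j : Fin m, j ≠ i →
        (if d' j then w n j d' else 0) = (if dhat n j then w n j (dhat n) else 0) := by
      intro j hj
      have hdj : d' j = dhat n j := Function.update_of_ne hj _ _
      have hw' : w n j d' = w n j (dhat n) := by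
        apply hdep
        intro k hk
        rcases Nat.lt_or_ge (j:ℕ) m₁ with hjl | hjh
        · have hkl : (k:ℕ) < m₁ := hGlow j hjl k hk
          have hki : k ≠ i := by
            intro h; subst h; exact absurd hkl (Nat.not_lt.mpr hi)
          exact Function.update_of_ne hki _ _
        · have hkj : k = j := by
            have := hk
            rw [hGhigh j hjh] at this
            simpa using this
          subst hkj
          exact Function.update_of_ne hj _ _
      rw [hdj, hw']
    have hsum : (∑ j, if d' j then w n j d' else 0)
        = v n i + ∑ j ∈ Finset.univ.erase i, (if dhat n j then w n j (dhat n) else 0) := by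
      rw [← Finset.add_sum_erase _ _ (Finset.mem_univ i)]
      congr 1
      · have hdi : d' i = true := Function.update_self _ _ _
        rw [if_pos hdi, hveq n i hi]
      · exact Finset.sum_congr rfl fun j hj => hterm j (Finset.ne_of_mem_erase hj)
    have hsum2 : (∑ j, if dhat n j then w n j (dhat n) else 0)
        = ∑ j ∈ Finset.univ.erase i, (if dhat n j then w n j (dhat n) else 0) := by
      rw [← Finset.add_sum_erase _ _ (Finset.mem_univ i), hfalse']
      simp
    have hpos : 0 < v n i := (hv01 n i hi).1
    have hle := hdhat n d'
    rw [hsum, hsum2] at hle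
    linarith
  -- Step 2: for each fixed d, the objective converges
  have hSlim : ∀ d : Fin m → Bool,
      Tendsto (fun n => ∑ i, if d i then w n i d else 0) atTop
        (nhds (∑ i : Fin m,
          if (d i = true ∧ (i:ℕ) < m₁ ∧ ∀ j ∈ G i, d j = dt j) then (1:ℝ) else 0)) := by
    intro d
    apply tendsto_finset_sum
    intro i _
    by_cases hdi : d i = true
    · have heqf : (fun n => if d i = true then w n i d else (0:ℝ)) = fun n => w n i d := by
        funext n; rw [if_pos hdi]
      rcases Nat.lt_or_ge (i:ℕ) m₁ with hil | hih
      · by_cases hmatch : ∀ j ∈ G i, d j = dt j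
        · rw [if_pos ⟨hdi, hil, hmatch⟩, heqf]
          exact hC1 i hil d hmatch
        · rw [if_neg (fun h => hmatch h.2.2), heqf]
          exact hC0 i hil d hmatch
      · rw [if_neg (fun h => absurd h.2.1 (Nat.not_lt.mpr hih))]
        have heq : (fun n => if d i = true then w n i d else (0:ℝ)) = fun n => v n i := by
          funext n; rw [if_pos hdi, hveq n i hih]
        rw [heq]; exact hv0 i hih
    · rw [if_neg (fun h => hdi h.1)]
      have heq : (fun n => if d i = true then w n i d else (0:ℝ)) = fun _ => (0:ℝ) := by
        funext n; rw [if_neg hdi]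
      rw [heq]; exact tendsto_const_nhds
  -- limit value at ds is t
  have hcds : (∑ i : Fin m,
      if (ds i = true ∧ (i:ℕ) < m₁ ∧ ∀ j ∈ G i, ds j = dt j) then (1:ℝ) else 0) = (t:ℝ) := by
    rw [ht]
    push_cast
    rw [← Finset.sum_boole]
    apply Finset.sum_congr rfl
    intro i _
    by_cases hil : (i:ℕ) < m₁
    · by_cases hdt : dt i = true
      · rw [if_pos ⟨by rw [hdslow i hil, hdt], hil, hdsmatch i hil⟩, if_pos hdt]
      · rw [if_neg (fun h => hdt ((hdslow i hil) ▸ h.1)), if_neg hdt]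
    · have hih := Nat.not_lt.mp hil
      rw [if_neg (fun h => absurd h.2.1 hil), if_neg (by simp [hdthigh i hih])]
  -- limit value at a bad d is at most t - 1
  have hcbad : ∀ d : Fin m → Bool, (∃ j : Fin m, (j:ℕ) < m₁ ∧ d j ≠ dt j) →
      (∑ i : Fin m, if (d i = true ∧ (i:ℕ) < m₁ ∧ ∀ j ∈ G i, d j = dt j) then (1:ℝ) else 0)
        ≤ (t:ℝ) - 1 := by
    rintro d ⟨j, hjl, hjne⟩
    obtain ⟨k, hkG, hkdt⟩ := hGfalse j hjl
    have hjk : j ∈ G k := (hGsym j k).mp hkG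
    have hsum : (∑ i : Fin m,
        if (d i = true ∧ (i:ℕ) < m₁ ∧ ∀ j ∈ G i, d j = dt j) then (1:ℝ) else 0)
        = ((Finset.univ.filter fun i : Fin m =>
            d i = true ∧ (i:ℕ) < m₁ ∧ ∀ j ∈ G i, d j = dt j).card : ℝ) := by
      rw [Finset.sum_boole]
    have hkmem : k ∈ Finset.univ.filter fun i => dt i = true := by
      simp [hkdt]
    have hsub : (Finset.univ.filter fun i : Fin m =>
          d i = true ∧ (i:ℕ) < m₁ ∧ ∀ j ∈ G i, d j = dt j)
        ⊆ (Finset.univ.filter fun i => dt i = true).erase k := by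
      intro i hi
      simp only [Finset.mem_filter, Finset.mem_univ, true_and] at hi
      obtain ⟨hdi, hil, hmatch⟩ := hi
      refine Finset.mem_erase.mpr ⟨?_, ?_⟩
      · intro h; subst h
        exact hjne (hmatch j hjk)
      · simp only [Finset.mem_filter, Finset.mem_univ, true_and]
        rw [← hmatch i (hGmem i)]; exact hdi
    have hcard := Finset.card_le_card hsub
    have hcerase : ((Finset.univ.filter fun i => dt i = true).erase k).card = t - 1 := by
      rw [Finset.card_erase_of_mem hkmem]
    have ht1 : 1 ≤ t := Finset.card_pos.mpr ⟨k, hkmem⟩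
    rw [hsum]
    have : ((Finset.univ.filter fun i : Fin m =>
        d i = true ∧ (i:ℕ) < m₁ ∧ ∀ j ∈ G i, d j = dt j).card : ℝ) ≤ ((t - 1 : ℕ) : ℝ) := by
      exact_mod_cast hcerase ▸ hcard
    calc _ ≤ ((t - 1 : ℕ) : ℝ) := this
      _ = (t:ℝ) - 1 := by
          rw [Nat.cast_sub ht1]; norm_num
  -- Step 3: eventually, any bad d has objective below t - 1/2, and ds above t - 1/2
  have hsep : ∀ᶠ n in atTop, ∀ d : Fin m → Bool,
      (∃ j : Fin m, (j:ℕ) < m₁ ∧ d j ≠ dt j) →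
      (∑ i, if d i then w n i d else 0) < (t:ℝ) - 1/2 := by
    rw [eventually_all]
    intro d
    by_cases hbad : ∃ j : Fin m, (j:ℕ) < m₁ ∧ d j ≠ dt j
    · have hlim := hSlim d
      have hlt : (∑ i : Fin m,
          if (d i = true ∧ (i:ℕ) < m₁ ∧ ∀ j ∈ G i, d j = dt j) then (1:ℝ) else 0)
          < (t:ℝ) - 1/2 := lt_of_le_of_lt (hcbad d hbad) (by norm_num)
      filter_upwards [hlim.eventually_lt_const hlt] with n hn
      exact fun _ => hn
    · filter_upwards with n hb
      exact absurd hb hbad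
  have hgood : ∀ᶠ n in atTop, (t:ℝ) - 1/2 < (∑ i, if ds i then w n i ds else 0) := by
    have hlim := hSlim ds
    rw [hcds] at hlim
    exact hlim.eventually_const_lt (by norm_num)
  have hN : ∀ᶠ n in atTop, ∀ i : Fin m, dhat n i = ds i := by
    filter_upwards [hsep, hgood] with n h1 h2
    intro i
    by_cases hil : (i:ℕ) < m₁
    · by_contra hne
      have hne' : dhat n i ≠ dt i := by rwa [← hdslow i hil]
      have hbad : ∃ j : Fin m, (j:ℕ) < m₁ ∧ dhat n j ≠ dt j := ⟨i, hil, hne'⟩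
      have hlt := h1 (dhat n) hbad
      have h3 := hdhat n ds
      linarith
    · rw [hhigh n i (Nat.not_lt.mp hil), hdshigh i (Nat.not_lt.mp hil)]
  obtain ⟨N, hN'⟩ := eventually_atTop.mp hN
  constructor
  · exact ⟨N, fun n hn =>
      ⟨fun i hil => by rw [hN' n hn i, hdslow i hil],
       fun i hih => by rw [hN' n hn i, hdshigh i hih]⟩⟩
  -- Step 4: the limit of the ratio
  have hHsum : (∑ i : Fin m, if m₁ ≤ (i:ℕ) then (1:ℝ) else 0) = (m:ℝ) - (m₁:ℝ) := by
    rw [Fin.sum_univ_eq_sum_range (fun i => if m₁ ≤ i then (1:ℝ) else 0) m]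
    rw [Finset.range_eq_Ico, ← Finset.sum_Ico_consecutive _ (Nat.zero_le m₁) (le_of_lt hm)]
    have h1 : (∑ i ∈ Finset.Ico 0 m₁, if m₁ ≤ i then (1:ℝ) else 0) = 0 := by
      apply Finset.sum_eq_zero
      intro i hi
      rw [Finset.mem_Ico] at hi
      rw [if_neg (Nat.not_le.mpr hi.2)]
    have h2 : (∑ i ∈ Finset.Ico m₁ m, if m₁ ≤ i then (1:ℝ) else 0) = ((m - m₁ : ℕ) : ℝ) := by
      rw [Finset.sum_congr rfl (fun i hi => if_pos (Finset.mem_Ico.mp hi).1)]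
      rw [Finset.sum_const, Nat.card_Ico]
      simp
    rw [h1, h2, Nat.cast_sub (le_of_lt hm)]
    ring
  have hden : (∑ i : Fin m, if ds i then (1:ℝ) else 0) = (t:ℝ) + ((m:ℝ) - (m₁:ℝ)) := by
    have hpt : ∀ i : Fin m, (if ds i then (1:ℝ) else 0)
        = (if dt i = true then (1:ℝ) else 0) + (if m₁ ≤ (i:ℕ) then (1:ℝ) else 0) := by
      intro i
      by_cases hil : (i:ℕ) < m₁
      · rw [hdslow i hil, if_neg (Nat.not_le.mpr hil), add_zero]
      · have hih := Nat.not_lt.mp hil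
        rw [hdshigh i hih, hdthigh i hih, if_pos hih]
        norm_num
    rw [Finset.sum_congr rfl fun i _ => hpt i, Finset.sum_add_distrib, hHsum]
    congr 1
    rw [ht]
    push_cast
    rw [← Finset.sum_boole]
  have hnum : Tendsto (fun n => ∑ i, if ds i then 1 - w n i ds else 0) atTop
      (nhds ((m:ℝ) - (m₁:ℝ))) := by
    rw [← hHsum]
    apply tendsto_finset_sum
    intro i _
    by_cases hil : (i:ℕ) < m₁
    · rw [if_neg (Nat.not_le.mpr hil)]
      by_cases hdt : dt i = true
      · have hds1 : ds i = true := by rw [hdslow i hil, hdt]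
        simp only [hds1, if_true]
        have h1 : Tendsto (fun _ : ℕ => (1:ℝ)) atTop (nhds 1) := tendsto_const_nhds
        have := h1.sub (hC1 i hil ds (hdsmatch i hil))
        simpa using this
      · have hds0 : ds i = false := by
          rw [hdslow i hil]
          cases h : dt i
          · rfl
          · exact absurd h hdt
        simp only [hds0, Bool.false_eq_true, if_false]
        exact tendsto_const_nhds
    · have hih := Nat.not_lt.mp hil
      rw [if_pos hih]
      have hds1 : ds i = true := hdshigh i hih
      simp only [hds1, if_true]
      have heq : (fun n => 1 - w n i ds) = fun n => 1 - v n i := by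
        funext n; rw [hveq n i hih]
      rw [heq]
      have h1 : Tendsto (fun _ : ℕ => (1:ℝ)) atTop (nhds 1) := tendsto_const_nhds
      have := h1.sub (hv0 i hih)
      simpa using this
  have hg : Tendsto (fun n => (∑ i, if ds i then 1 - w n i ds else 0)
      / ((t:ℝ) + ((m:ℝ) - (m₁:ℝ)))) atTop
      (nhds (((m:ℝ) - (m₁:ℝ)) / ((t:ℝ) + ((m:ℝ) - (m₁:ℝ))))) :=
    hnum.div_const _
  refine Tendsto.congr' ?_ hg
  filter_upwards [eventually_ge_atTop N] with n hn
  have hde : dhat n = ds := funext (hN' n hn)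
  rw [hde, hden]
end

section
/- Theorem 7 (lower bound on the asymptotic maximal modified FDR): Suppose 1 ≤ m_1 < m, suppose the group membership is symmetric (j ∈ G_i if and only if i ∈ G_j), suppose G_i ⊆ {1,…,m_1} for every i ≤ m_1 and each such G_i contains at least one index k with d_k^t = 1, and suppose G_i ⊆ {m_1+1,…,m} for every i > m_1 with d_i^t = 0 for all i > m_1. Assume the posterior convergence condition (C) holds and that w_{in}(d) > 0 for all n, i, d. Let d̂_n be a maximizer of Σ_{i=1}^m d_i w_{in}(d) over d ∈ {0,1}^m (the non-marginal rule with β = 0). Then for all sufficiently large n one has d̂_{n,i} = d_i^t for every i ≤ m_1 and Σ_{i>m_1} d̂_{n,i} ≥ 1, and liminf_{n→∞} (Σ_{i=1}^m d̂_{n,i}(1 − w_{in}(d̂_n))) / (Σ_{i=1}^m d̂_{n,i}) ≥ 1 / (Σ_{i=1}^m d_i^t + 1). -/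
/-!
Groups never straddle the split into the low block `{i < m₁}` and the high block, so the
objective `∑ d_i w_i(d)` is the sum of two independent block objectives and a maximizer maximizes
each block. On the low block the true configuration scores about `|T|` (`T` the true rejections),
while a configuration erring at `j` loses, by symmetry of the groups, the true index `k ∈ G_j` and
scores about `|T| - 1` at most; so the low block is eventually decided correctly. On the high
block all weights are positive, so the maximizer always rejects there, but every such rejection
is false and its weight tends to `0`, uniformly over the finitely many configurations. With
`a ≥ 1` high rejections the posterior FDR is then at least
`(a - o(1)) / (|T| + a) ≥ 1 / (|T| + 1) - o(1)`.
-/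

open Filter Finset

theorem one_div_add_one_sub_le_div {τ a e N : ℝ} (hτ : 0 ≤ τ) (ha : 1 ≤ a) (he : 0 ≤ e)
    (hN : a - e ≤ N) : 1 / (τ + 1) - e ≤ N / (τ + a) := by
  have hpos : 0 < τ + a := by linarith
  calc 1 / (τ + 1) - e ≤ a / (τ + a) - e / (τ + a) := by
        gcongr ?_ - ?_
        · rw [div_le_div_iff₀ (by linarith) hpos]; nlinarith
        · exact div_le_self he (by linarith)
    _ = (a - e) / (τ + a) := by ring
    _ ≤ N / (τ + a) := by gcongr

theorem le_liminf_of_eventually_sub_le {α : Type*} {l : Filter α} [l.NeBot] {u g : α → ℝ}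
    {c B : ℝ} (hg : Tendsto g l (nhds 0)) (hu : ∀ x, u x ≤ B) (h : ∀ᶠ x in l, c - g x ≤ u x) :
    c ≤ liminf u l := by
  have hlim : Tendsto (fun x => c - g x) l (nhds c) := by
    simpa using tendsto_const_nhds.sub hg
  calc c = liminf (fun x => c - g x) l := hlim.liminf_eq.symm
    _ ≤ liminf u l := liminf_le_liminf h hlim.isBoundedUnder_ge
        (isBoundedUnder_of ⟨B, hu⟩).isCoboundedUnder_ge

namespace NonMarginal

variable {ι : Type*} {G : ι → Finset ι} {dt : ι → Bool}

/-- `d ∈ D_i` in the paper's notation. -/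
def CorrectAt (G : ι → Finset ι) (dt d : ι → Bool) (i : ι) : Prop :=
  ∀ j ∈ G i, d j = dt j

instance (d : ι → Bool) (i : ι) : Decidable (CorrectAt G dt d i) :=
  inferInstanceAs (Decidable (∀ j ∈ G i, d j = dt j))

/-- The objective of the non-marginal rule, restricted to the hypotheses in `s`. -/
def score (w : ι → (ι → Bool) → ℝ) (s : Finset ι) (d : ι → Bool) : ℝ :=
  ∑ i ∈ s, if d i then w i d else 0

noncomputable def posteriorFDR [Fintype ι] (w : ι → (ι → Bool) → ℝ) (d : ι → Bool) : ℝ :=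
  (∑ i, if d i then 1 - w i d else 0) / ∑ i, if d i then (1 : ℝ) else 0

theorem score_nonneg {w : ι → (ι → Bool) → ℝ} (hw : ∀ i d, 0 ≤ w i d) (s : Finset ι)
    (d : ι → Bool) : 0 ≤ score w s d :=
  sum_nonneg fun i _ => by split <;> simp [hw]

theorem posteriorFDR_le_one [Fintype ι] {w : ι → (ι → Bool) → ℝ} (hw : ∀ i d, 0 ≤ w i d)
    (d : ι → Bool) : posteriorFDR w d ≤ 1 :=
  div_le_one_of_le₀ (sum_le_sum fun i _ => by split <;> simp [hw])
    (sum_nonneg fun i _ => by split <;> simp)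

theorem card_correctAt_lt (hGmem : ∀ i, i ∈ G i) {s : Finset ι} {b : ι → Bool} {j k : ι}
    (hk : k ∈ s) (hjk : j ∈ G k) (hdtk : dt k = true) (hbj : b j ≠ dt j) :
    #{i ∈ s | b i ∧ CorrectAt G dt b i} < #{i ∈ s | dt i} := by
  refine card_lt_card ((ssubset_iff_of_subset fun i hi => ?_).2 ⟨k, ?_, ?_⟩)
  · simp only [mem_filter] at hi ⊢
    exact ⟨hi.1, hi.2.2 i (hGmem i) ▸ hi.2.1⟩
  · simp [hk, hdtk]
  · simp only [mem_filter, not_and]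
    exact fun _ _ hcorrect => hbj (hcorrect j hjk)

theorem tendsto_score {w : ℕ → ι → (ι → Bool) → ℝ}
    (hC1 : ∀ i d, CorrectAt G dt d i → Tendsto (fun n => w n i d) atTop (nhds 1))
    (hC0 : ∀ i d, ¬ CorrectAt G dt d i → Tendsto (fun n => w n i d) atTop (nhds 0))
    (s : Finset ι) (d : ι → Bool) :
    Tendsto (fun n => score (w n) s d) atTop (nhds #{i ∈ s | d i ∧ CorrectAt G dt d i}) := by
  rw [← sum_boole]
  refine tendsto_finsetSum s fun i _ => ?_
  by_cases hdi : d i <;> by_cases hi : CorrectAt G dt d i <;> simp [hdi, hi, hC1 i d, hC0 i d]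

theorem eventually_forall_mem_eq_of_isMax [Finite ι] {w : ℕ → ι → (ι → Bool) → ℝ}
    (hC1 : ∀ i d, CorrectAt G dt d i → Tendsto (fun n => w n i d) atTop (nhds 1))
    (hC0 : ∀ i d, ¬ CorrectAt G dt d i → Tendsto (fun n => w n i d) atTop (nhds 0))
    (hGmem : ∀ i, i ∈ G i) (hGsym : ∀ i j, j ∈ G i ↔ i ∈ G j) {s : Finset ι}
    (hs : ∀ i ∈ s, G i ⊆ s) (htrue : ∀ i ∈ s, ∃ k ∈ G i, dt k = true)
    {dhat : ℕ → ι → Bool} (hmax : ∀ n d, score (w n) s d ≤ score (w n) s (dhat n)) :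
    ∀ᶠ n in atTop, ∀ i ∈ s, dhat n i = dt i := by
  have hbad : ∀ b : ι → Bool, ∀ᶠ n in atTop,
      (∃ i ∈ s, b i ≠ dt i) → score (w n) s b < score (w n) s dt := by
    intro b
    refine eventually_imp_distrib_left.2 fun ⟨j, hj, hbj⟩ => ?_
    obtain ⟨k, hkj, hk⟩ := htrue j hj
    refine (tendsto_score hC1 hC0 s b).eventually_lt (tendsto_score hC1 hC0 s dt) ?_
    have hdt : #{i ∈ s | dt i ∧ CorrectAt G dt dt i} = #{i ∈ s | dt i} := by
      simp [CorrectAt]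
    exact_mod_cast hdt ▸ card_correctAt_lt hGmem (hs j hj hkj) ((hGsym j k).1 hkj) hk hbj
  filter_upwards [eventually_all.2 hbad] with n hn
  by_contra! h
  exact (hn (dhat n) h).not_ge (hmax n dt)

variable [Fintype ι] [DecidableEq ι]

theorem subset_compl_of_notMem (hGsym : ∀ i j, j ∈ G i ↔ i ∈ G j) {s : Finset ι}
    (hs : ∀ i ∈ s, G i ⊆ s) {i : ι} (hi : i ∉ s) : G i ⊆ sᶜ :=
  fun j hj => mem_compl.2 fun hjs => hi (hs j hjs ((hGsym i j).1 hj))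

theorem tendsto_sum_score_of_forall_false {w : ℕ → ι → (ι → Bool) → ℝ}
    (hC1 : ∀ i d, CorrectAt G dt d i → Tendsto (fun n => w n i d) atTop (nhds 1))
    (hC0 : ∀ i d, ¬ CorrectAt G dt d i → Tendsto (fun n => w n i d) atTop (nhds 0))
    (hGmem : ∀ i, i ∈ G i) {s : Finset ι} (hs : ∀ i ∈ s, dt i = false) :
    Tendsto (fun n => ∑ d, score (w n) s d) atTop (nhds 0) := by
  rw [← sum_const_zero (s := (univ : Finset (ι → Bool)))]
  refine tendsto_finsetSum _ fun d _ => ?_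
  convert tendsto_score hC1 hC0 s d
  refine (Nat.cast_eq_zero.2 (card_eq_zero.2 (filter_eq_empty_iff.2 ?_))).symm
  rintro i hi ⟨hdi, hcorrect⟩
  rw [hcorrect i (hGmem i), hs i hi] at hdi
  exact Bool.false_ne_true hdi

section Score

variable {w : ι → (ι → Bool) → ℝ}

theorem score_piecewise (hdep : ∀ i d d', (∀ j ∈ G i, d j = d' j) → w i d = w i d')
    (hGsym : ∀ i j, j ∈ G i ↔ i ∈ G j) {s : Finset ι}
    (hs : ∀ i ∈ s, G i ⊆ s) (d d' : ι → Bool) :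
    score w univ (s.piecewise d d') = score w s d + score w sᶜ d' := by
  rw [score, ← sum_add_sum_compl s]
  congr 1
  · refine sum_congr rfl fun i hi => ?_
    rw [s.piecewise_eq_of_mem d d' hi,
      hdep i _ d fun j hj => s.piecewise_eq_of_mem d d' (hs i hi hj)]
  · refine sum_congr rfl fun i hi => ?_
    have hi' : i ∉ s := mem_compl.1 hi
    rw [s.piecewise_eq_of_notMem d d' hi', hdep i _ d' fun j hj =>
      s.piecewise_eq_of_notMem d d' (mem_compl.1 (subset_compl_of_notMem hGsym hs hi' hj))]

theorem score_le_score_of_isMax (hdep : ∀ i d d', (∀ j ∈ G i, d j = d' j) → w i d = w i d')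
    (hGsym : ∀ i j, j ∈ G i ↔ i ∈ G j) {s : Finset ι} (hs : ∀ i ∈ s, G i ⊆ s)
    {dhat : ι → Bool} (hmax : ∀ d, score w univ d ≤ score w univ dhat) (d : ι → Bool) :
    score w s d ≤ score w s dhat := by
  have h := hmax (s.piecewise d dhat)
  rw [score_piecewise hdep hGsym hs, ← s.piecewise_same dhat,
    score_piecewise hdep hGsym hs, s.piecewise_same] at h
  linarith

theorem score_lt_score_update (hdep : ∀ i d d', (∀ j ∈ G i, d j = d' j) → w i d = w i d')
    {d : ι → Bool} {i₀ : ι} (hd : d i₀ = false)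
    (hpos : 0 < w i₀ (Function.update d i₀ true)) (hG : ∀ i, d i = true → i₀ ∉ G i) :
    score w univ d < score w univ (Function.update d i₀ true) := by
  have hrest : ∀ i ∈ univ.erase i₀, (if d i then w i d else 0) =
      if Function.update d i₀ true i then w i (Function.update d i₀ true) else 0 := by
    intro i hi
    rw [Function.update_of_ne (ne_of_mem_erase hi)]
    split
    · next hdi =>
      exact hdep i _ _ fun j hj =>
        (Function.update_of_ne (fun h : j = i₀ => hG i hdi (h ▸ hj)) _ _).symm
    · rfl
  rw [score, score, ← add_sum_erase _ _ (mem_univ i₀), ← add_sum_erase _ _ (mem_univ i₀),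
    sum_congr rfl hrest]
  simpa [hd] using hpos

theorem exists_rejection_notMem (hdep : ∀ i d d', (∀ j ∈ G i, d j = d' j) → w i d = w i d')
    (hw : ∀ i d, 0 < w i d) {s : Finset ι} (hs : ∀ i ∈ s, G i ⊆ s) {i₀ : ι} (hi₀ : i₀ ∉ s)
    {dhat : ι → Bool} (hmax : ∀ d, score w univ d ≤ score w univ dhat) :
    ∃ i ∉ s, dhat i = true := by
  by_contra! h
  have hG : ∀ i, dhat i = true → i₀ ∉ G i := fun i hi hi₀G => by
    by_cases his : i ∈ s
    · exact hi₀ (hs i his hi₀G)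
    · exact h i his hi
  exact (score_lt_score_update hdep (by simpa using h i₀ hi₀) (hw _ _) hG).not_ge (hmax _)

theorem one_div_sub_score_le_posteriorFDR (hw₀ : ∀ i d, 0 ≤ w i d) (hw₁ : ∀ i d, w i d ≤ 1)
    (s : Finset ι) {d : ι → Bool} (hd : ∃ i ∉ s, d i = true) :
    1 / (#{i ∈ s | d i} + 1 : ℝ) - score w sᶜ d ≤ posteriorFDR w d := by
  have hcount : ∀ t : Finset ι, (∑ i ∈ t, if d i then (1 : ℝ) else 0) = #{i ∈ t | d i} :=
    fun t => sum_boole _ t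
  have hden : (∑ i, if d i then (1 : ℝ) else 0) = #{i ∈ s | d i} + #{i ∈ sᶜ | d i} := by
    rw [← sum_add_sum_compl s, hcount, hcount]
  have hnum_s : 0 ≤ ∑ i ∈ s, if d i then 1 - w i d else 0 :=
    sum_nonneg fun i _ => by split <;> simp [hw₁]
  have hnum_sc : (∑ i ∈ sᶜ, if d i then 1 - w i d else 0) = #{i ∈ sᶜ | d i} - score w sᶜ d := by
    rw [← hcount, score, ← sum_sub_distrib]
    exact sum_congr rfl fun i _ => by split <;> simp
  have hreject : (1 : ℝ) ≤ #{i ∈ sᶜ | d i} := by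
    obtain ⟨i, hi, hdi⟩ := hd
    exact_mod_cast card_pos.2 ⟨i, by simp [hi, hdi]⟩
  rw [posteriorFDR, hden, ← sum_add_sum_compl s]
  exact one_div_add_one_sub_le_div (Nat.cast_nonneg _) hreject (score_nonneg hw₀ _ _)
    (by rw [hnum_sc]; linarith)

end Score

end NonMarginal

open NonMarginal

theorem max_mFDR_lower_bound_general
    (m m₁ : ℕ) (hm : m₁ < m)
    (dt : Fin m → Bool)
    (G : Fin m → Finset (Fin m)) (hGmem : ∀ i, i ∈ G i)
    (hGsym : ∀ i j, j ∈ G i ↔ i ∈ G j)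
    (hGlow : ∀ i : Fin m, (i:ℕ) < m₁ → ∀ j ∈ G i, (j:ℕ) < m₁)
    (hGfalse : ∀ i : Fin m, (i:ℕ) < m₁ → ∃ k ∈ G i, dt k = true)
    (hdthigh : ∀ i : Fin m, m₁ ≤ (i:ℕ) → dt i = false)
    (w : ℕ → Fin m → (Fin m → Bool) → ℝ)
    (hw : ∀ n i d, w n i d ∈ Set.Ioo (0:ℝ) 1)
    (hdep : ∀ n i (d d' : Fin m → Bool), (∀ j ∈ G i, d j = d' j) → w n i d = w n i d')
    (hC1 : ∀ (i : Fin m) (d : Fin m → Bool),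
      (∀ j ∈ G i, d j = dt j) → Tendsto (fun n => w n i d) atTop (nhds 1))
    (hC0 : ∀ (i : Fin m) (d : Fin m → Bool),
      (¬ ∀ j ∈ G i, d j = dt j) → Tendsto (fun n => w n i d) atTop (nhds 0))
    (dhat : ℕ → Fin m → Bool)
    (hdhat : ∀ n (d : Fin m → Bool),
      (∑ i, if d i then w n i d else 0) ≤
        (∑ i, if dhat n i then w n i (dhat n) else 0)) :
    (∃ N : ℕ, ∀ n ≥ N,
      (∀ i : Fin m, (i:ℕ) < m₁ → dhat n i = dt i) ∧
      (∃ i : Fin m, m₁ ≤ (i:ℕ) ∧ dhat n i = true)) ∧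
    (1:ℝ) / (((Finset.univ.filter fun i => dt i = true).card : ℝ) + 1) ≤
      Filter.liminf (fun n =>
        (∑ i, if dhat n i then 1 - w n i (dhat n) else 0) /
          (∑ i, if dhat n i then (1:ℝ) else 0)) Filter.atTop := by
  set L : Finset (Fin m) := univ.filter fun i => (i : ℕ) < m₁
  have hLmem (i : Fin m) : i ∈ L ↔ (i : ℕ) < m₁ := by simp [L]
  have hL : ∀ i ∈ L, G i ⊆ L := fun i hi j hj => (hLmem j).2 (hGlow i ((hLmem i).1 hi) j hj)
  have hfalse : ∀ i ∈ Lᶜ, dt i = false := fun i hi => hdthigh i (by simpa [hLmem] using hi)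
  have hw₀ (n i d) : 0 ≤ w n i d := (hw n i d).1.le
  have hcorrect : ∀ᶠ n in atTop, ∀ i ∈ L, dhat n i = dt i :=
    eventually_forall_mem_eq_of_isMax hC1 hC0 hGmem hGsym hL
      (fun i hi => hGfalse i ((hLmem i).1 hi))
      fun n => score_le_score_of_isMax (hdep n) hGsym hL (hdhat n)
  have hreject (n : ℕ) : ∃ i ∉ L, dhat n i = true :=
    exists_rejection_notMem (hdep n) (fun i d => (hw n i d).1) hL (i₀ := ⟨m₁, hm⟩)
      (by simp [hLmem]) (hdhat n)
  refine ⟨?_, ?_⟩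
  · obtain ⟨N, hN⟩ := eventually_atTop.1 hcorrect
    refine ⟨N, fun n hn => ⟨fun i hi => hN n hn i ((hLmem i).2 hi), ?_⟩⟩
    obtain ⟨i, hi, hdi⟩ := hreject n
    exact ⟨i, by simpa [hLmem] using hi, hdi⟩
  refine le_liminf_of_eventually_sub_le (tendsto_sum_score_of_forall_false hC1 hC0 hGmem hfalse)
    (fun n => posteriorFDR_le_one (hw₀ n) (dhat n)) ?_
  filter_upwards [hcorrect] with n hn
  have hcount : #{i ∈ L | dhat n i} = #{i | dt i} := by
    refine congrArg card (ext fun i => ?_)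
    simp only [mem_filter, mem_univ, true_and]
    refine ⟨fun ⟨hi, h⟩ => hn i hi ▸ h, fun h => ?_⟩
    have hi : i ∈ L := by_contra fun hi => by simp [hfalse i (mem_compl.2 hi)] at h
    exact ⟨hi, (hn i hi).trans h⟩
  calc _ ≤ 1 / (#{i ∈ L | dhat n i} + 1 : ℝ) - score (w n) Lᶜ (dhat n) := by
        rw [hcount]
        gcongr
        exact single_le_sum (fun d _ => score_nonneg (hw₀ n) _ d) (mem_univ _)
    _ ≤ posteriorFDR (w n) (dhat n) :=
        one_div_sub_score_le_posteriorFDR (hw₀ n) (fun i d => (hw n i d).2.le) L (hreject n)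

/-- Theorem 7 (lower bound on the asymptotic maximal modified FDR). -/
theorem max_mFDR_lower_bound
    (m m₁ : ℕ) (hm₁ : 1 ≤ m₁) (hm : m₁ < m)
    (dt : Fin m → Bool)
    (G : Fin m → Finset (Fin m)) (hGmem : ∀ i, i ∈ G i)
    (hGsym : ∀ i j, j ∈ G i ↔ i ∈ G j)
    (hGlow : ∀ i : Fin m, (i:ℕ) < m₁ → ∀ j ∈ G i, (j:ℕ) < m₁)
    (hGfalse : ∀ i : Fin m, (i:ℕ) < m₁ → ∃ k ∈ G i, dt k = true)
    (hGhigh : ∀ i : Fin m, m₁ ≤ (i:ℕ) → ∀ j ∈ G i, m₁ ≤ (j:ℕ))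
    (hdthigh : ∀ i : Fin m, m₁ ≤ (i:ℕ) → dt i = false)
    (w : ℕ → Fin m → (Fin m → Bool) → ℝ)
    (hw : ∀ n i d, w n i d ∈ Set.Ioo (0:ℝ) 1)
    (hdep : ∀ n i (d d' : Fin m → Bool), (∀ j ∈ G i, d j = d' j) → w n i d = w n i d')
    (hC1 : ∀ (i : Fin m) (d : Fin m → Bool),
      (∀ j ∈ G i, d j = dt j) → Tendsto (fun n => w n i d) atTop (nhds 1))
    (hC0 : ∀ (i : Fin m) (d : Fin m → Bool),
      (¬ ∀ j ∈ G i, d j = dt j) → Tendsto (fun n => w n i d) atTop (nhds 0))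
    (dhat : ℕ → Fin m → Bool)
    (hdhat : ∀ n (d : Fin m → Bool),
      (∑ i, if d i then w n i d else 0) ≤
        (∑ i, if dhat n i then w n i (dhat n) else 0)) :
    (∃ N : ℕ, ∀ n ≥ N,
      (∀ i : Fin m, (i:ℕ) < m₁ → dhat n i = dt i) ∧
      (∃ i : Fin m, m₁ ≤ (i:ℕ) ∧ dhat n i = true)) ∧
    (1:ℝ) / (((Finset.univ.filter fun i => dt i = true).card : ℝ) + 1) ≤
      Filter.liminf (fun n =>
        (∑ i, if dhat n i then 1 - w n i (dhat n) else 0) /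
          (∑ i, if dhat n i then (1:ℝ) else 0)) Filter.atTop :=
  max_mFDR_lower_bound_general m m₁ hm dt G hGmem hGsym hGlow hGfalse hdthigh w hw hdep hC1 hC0 dhat
    hdhat
end

section
/- Theorem 11 (posterior FNR rate under α-control of the modified FDR): Suppose d^t ≠ (1,…,1), and let d̂_n ∈ {0,1}^m be decision configurations such that for all sufficiently large n: d̂_{n,i} = 1 for every i with d_i^t = 1, and Σ_{i=1}^m (1 − d̂_{n,i}) ≥ 1. Suppose for each i with d_i^t = 0 there is a constant H̃_i > 0 such that (1/n)·log v_{in} → −H̃_i as n → ∞. Then limsup_{n→∞} (1/n)·log[ (Σ_{i=1}^m (1 − d̂_{n,i}) v_{in}) / (Σ_{i=1}^m (1 − d̂_{n,i})) ] ≤ −min{H̃_i : d_i^t = 0}. -/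
open Filter Topology Finset
open scoped BigOperators

/-
Eventually the accepted hypotheses form a nonempty set of true nulls, so the posterior FNR is an
average of `v n i` over true nulls and hence at most the largest of them. Thus `log FNR / n` is
eventually bounded above by `max_{i null} log (v n i) / n → max_i (-H̃ i) = -min_i H̃ i`, and
below by the corresponding minimum, which keeps the `limsup` (taken in `ℝ`) from collapsing to a
junk value.
-/

theorem Filter.limsup_le_of_eventually_le_of_tendsto {ι α : Type*}
    [ConditionallyCompleteLinearOrder α] [TopologicalSpace α] [OrderTopology α]
    {l : Filter ι} [l.NeBot] {f g : ι → α} {a : α}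
    (hf : IsBoundedUnder (· ≥ ·) l f) (hfg : f ≤ᶠ[l] g) (hg : Tendsto g l (𝓝 a)) :
    limsup f l ≤ a :=
  (limsup_le_limsup hfg hf.isCoboundedUnder_le hg.isBoundedUnder_le).trans hg.limsup_eq.le

namespace Finset

variable {ι : Type*}

theorem sup'_neg_eq_neg_inf' {α : Type*} [AddCommGroup α] [LinearOrder α] [IsOrderedAddMonoid α]
    {s : Finset ι} (hs : s.Nonempty) (g : ι → α) :
    s.sup' hs (fun i => -g i) = -s.inf' hs g := by
  obtain ⟨j, hj, hgj⟩ := s.exists_mem_eq_inf' hs g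
  rw [hgj]
  exact le_antisymm (sup'_le _ _ fun i hi => neg_le_neg (hgj ▸ inf'_le g hi))
    (le_sup' (fun i => -g i) hj)

theorem sum_ite_div_sum_ite_eq_expect [Fintype ι] (d : ι → Bool) (f : ι → ℝ) :
    (∑ i, if d i then 0 else f i) / (∑ i, if d i then 0 else (1 : ℝ)) =
      𝔼 i ∈ univ.filter (fun i => d i = false), f i := by
  have hnum :
      (∑ i, if d i then 0 else f i) = ∑ i ∈ univ.filter (fun i => d i = false), f i := by
    rw [sum_filter]
    exact sum_congr rfl fun i _ => by cases d i <;> rfl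
  have hden : (∑ i, if d i then 0 else (1 : ℝ)) = #(univ.filter fun i => d i = false) := by
    rw [card_filter]
    push_cast
    exact sum_congr rfl fun i _ => by cases d i <;> rfl
  rw [hnum, hden, expect_eq_sum_div_card]

variable {s t : Finset ι} {f : ι → ℝ} {c : ℝ}

theorem log_expect_div_le_sup' (hs : s.Nonempty) (hst : s ⊆ t) (ht : t.Nonempty)
    (hf : ∀ i ∈ s, 0 < f i) (hc : 0 ≤ c) :
    Real.log (𝔼 i ∈ s, f i) / c ≤ t.sup' ht (fun i => Real.log (f i) / c) := by
  obtain ⟨j, hjs, hj⟩ := exists_le_of_le_expect (f := f) hs le_rfl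
  calc Real.log (𝔼 i ∈ s, f i) / c ≤ Real.log (f j) / c := by
        gcongr
        exact expect_pos hf hs
    _ ≤ t.sup' ht (fun i => Real.log (f i) / c) := le_sup' (fun i => Real.log (f i) / c) (hst hjs)

theorem inf'_le_log_expect_div (hs : s.Nonempty) (hst : s ⊆ t) (ht : t.Nonempty)
    (hf : ∀ i ∈ s, 0 < f i) (hc : 0 ≤ c) :
    t.inf' ht (fun i => Real.log (f i) / c) ≤ Real.log (𝔼 i ∈ s, f i) / c := by
  obtain ⟨j, hjs, hj⟩ := exists_le_of_expect_le (f := f) hs le_rfl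
  calc t.inf' ht (fun i => Real.log (f i) / c) ≤ Real.log (f j) / c :=
        inf'_le (fun i => Real.log (f i) / c) (hst hjs)
    _ ≤ Real.log (𝔼 i ∈ s, f i) / c := by
        gcongr
        exact hf j hjs

end Finset

theorem FNR_rate_under_alpha_control_general
    (m : ℕ)
    (dt : Fin m → Bool)
    (hne : (Finset.univ.filter fun i => dt i = false).Nonempty)
    (v : ℕ → Fin m → ℝ) (hv : ∀ n i, v n i ∈ Set.Ioo (0:ℝ) 1)
    (Ht : Fin m → ℝ)
    (hHt : ∀ i, dt i = false →
      Tendsto (fun n : ℕ => Real.log (v n i) / n) atTop (nhds (-(Ht i))))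
    (dhat : ℕ → Fin m → Bool)
    (hd1 : ∀ᶠ n in atTop, ∀ i, dt i = true → dhat n i = true)
    (hd2 : ∀ᶠ n in atTop, ∃ i, dhat n i = false) :
    Filter.limsup (fun n : ℕ =>
        Real.log ((∑ i, if dhat n i then 0 else v n i) /
          (∑ i, if dhat n i then 0 else (1:ℝ))) / n) Filter.atTop
      ≤ -((Finset.univ.filter fun i => dt i = false).inf' hne Ht) := by
  have hA : ∀ᶠ n in atTop, (univ.filter fun i => dhat n i = false).Nonempty ∧
      (univ.filter fun i => dhat n i = false) ⊆ univ.filter fun i => dt i = false := by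
    filter_upwards [hd1, hd2] with n hrej ⟨i, hi⟩
    refine ⟨⟨i, by simpa using hi⟩, fun j hj => ?_⟩
    simp only [mem_filter, mem_univ, true_and] at hj ⊢
    cases hdt : dt j
    · rfl
    · simp [hrej j hdt] at hj
  have hHtS : ∀ i ∈ univ.filter fun i => dt i = false,
      Tendsto (fun n : ℕ => Real.log (v n i) / n) atTop (𝓝 (-Ht i)) :=
    fun i hi => hHt i (mem_filter.1 hi).2
  simp_rw [sum_ite_div_sum_ite_eq_expect]
  refine limsup_le_of_eventually_le_of_tendsto ?_ ?_
    (sup'_neg_eq_neg_inf' hne Ht ▸ Tendsto.finset_sup'_nhds_apply hne hHtS)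
  · refine (Tendsto.finset_inf'_nhds_apply hne hHtS).isBoundedUnder_ge.mono_ge ?_
    filter_upwards [hA] with n ⟨hAne, hAS⟩
    exact inf'_le_log_expect_div hAne hAS hne (fun i _ => (hv n i).1) n.cast_nonneg
  · filter_upwards [hA] with n ⟨hAne, hAS⟩
    exact log_expect_div_le_sup' hAne hAS hne (fun i _ => (hv n i).1) n.cast_nonneg

/-- Theorem 11 (posterior FNR rate under α-control of the modified FDR). -/
theorem FNR_rate_under_alpha_control
    (m : ℕ) (hm : 1 ≤ m)
    (dt : Fin m → Bool)
    (hne : (Finset.univ.filter fun i => dt i = false).Nonempty)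
    (v : ℕ → Fin m → ℝ) (hv : ∀ n i, v n i ∈ Set.Ioo (0:ℝ) 1)
    (Ht : Fin m → ℝ) (hHtpos : ∀ i, dt i = false → 0 < Ht i)
    (hHt : ∀ i, dt i = false →
      Tendsto (fun n : ℕ => Real.log (v n i) / n) atTop (nhds (-(Ht i))))
    (dhat : ℕ → Fin m → Bool)
    (hd1 : ∀ᶠ n in atTop, ∀ i, dt i = true → dhat n i = true)
    (hd2 : ∀ᶠ n in atTop, ∃ i, dhat n i = false) :
    Filter.limsup (fun n : ℕ =>
        Real.log ((∑ i, if dhat n i then 0 else v n i) /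
          (∑ i, if dhat n i then 0 else (1:ℝ))) / n) Filter.atTop
      ≤ -((Finset.univ.filter fun i => dt i = false).inf' hne Ht) :=
  FNR_rate_under_alpha_control_general m dt hne v hv Ht hHt dhat hd1 hd2
end

section
/- Deterministic Cesàro limits for the AR(1) drift sequence (proved within Lemma 3): Let p ≥ 1, let z_t ∈ ℝ^p for t = 1, 2, …, let β₀ ∈ ℝ^p, let ρ₀ ∈ ℝ with |ρ₀| < 1, and let Σ_z be a p × p real matrix. Assume: (i) sup_{t≥1} |z_t′β₀| ≤ C for some C > 0; (ii) (1/n)·Σ_{t=1}^n z_t → 0 as n → ∞; (iii) for every fixed k ≥ 1, (1/n)·Σ_{t=1}^n z_{t+k} z_t′ → 0 (the zero matrix) as n → ∞; and (iv) (1/n)·Σ_{t=1}^n z_t z_t′ → Σ_z as n → ∞. Define ϱ_t = Σ_{k=1}^t ρ₀^{t−k} z_k′β₀. Then (1/n)·Σ_{t=1}^n ϱ_t → 0 and (1/n)·Σ_{t=1}^n ϱ_t² → β₀′ Σ_z β₀ / (1 − ρ₀²) as n → ∞. -/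
/-!
With `u t = z t ⬝ β₀`, the drift satisfies `ϱ t = ρ ϱ (t-1) + u t`, and summing this recursion gives
`(1 - ρ) ∑_{t ≤ n} ϱ t = ∑_{t ≤ n} u t - ρ ϱ n` with `ϱ n` bounded; so the Cesàro means of the drift
of bounded innovations converge to `(lim mean u) / (1 - ρ)`.

The square `ϱ t ^ 2` is again such a drift, with coefficient `ρ ^ 2` and innovation
`2 ρ ϱ (t-1) u t + u t ^ 2`. The mean of the cross term is `∑_j ρ ^ j` times the mean of the
lag-`(j+1)` products `u (s + j + 1) u s`, each of which tends to `0`; the bound `|ρ| ^ j C ^ 2`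
is summable, so dominated convergence passes the limit through the series.
-/

open Filter Finset Topology

/-- The paper's `ϱ t`, with `u t` in the role of `z t ⬝ β₀`. -/
noncomputable def arDrift (ρ : ℝ) (u : ℕ → ℝ) (t : ℕ) : ℝ :=
  ∑ k ∈ Icc 1 t, ρ ^ (t - k) * u k

section ArDrift

variable {ρ B : ℝ} {u : ℕ → ℝ}

@[simp]
lemma arDrift_zero (ρ : ℝ) (u : ℕ → ℝ) : arDrift ρ u 0 = 0 := by
  simp [arDrift]

lemma arDrift_succ (ρ : ℝ) (u : ℕ → ℝ) (t : ℕ) :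
    arDrift ρ u (t + 1) = ρ * arDrift ρ u t + u (t + 1) := by
  rw [arDrift, sum_Icc_succ_top (by omega), Nat.sub_self, pow_zero, one_mul, arDrift, mul_sum]
  congr 1
  refine sum_congr rfl fun k hk => ?_
  rw [mem_Icc] at hk
  rw [← mul_assoc, ← pow_succ', Nat.sub_add_comm hk.2]

lemma eq_arDrift_of_succ {x : ℕ → ℝ} (h0 : x 0 = 0)
    (hsucc : ∀ t, x (t + 1) = ρ * x t + u (t + 1)) (t : ℕ) : x t = arDrift ρ u t := by
  induction t with
  | zero => simp [h0]
  | succ t ih => rw [hsucc, ih, arDrift_succ]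

lemma abs_arDrift_le (hρ : |ρ| < 1) (hu : ∀ t, 1 ≤ t → |u t| ≤ B) (t : ℕ) :
    |arDrift ρ u t| ≤ B / (1 - |ρ|) := by
  have hρ' : 0 < 1 - |ρ| := by linarith
  induction t with
  | zero => simpa using div_nonneg ((abs_nonneg _).trans (hu 1 le_rfl)) hρ'.le
  | succ t ih =>
    calc |arDrift ρ u (t + 1)| ≤ |ρ| * |arDrift ρ u t| + |u (t + 1)| := by
          rw [arDrift_succ, ← abs_mul]; exact abs_add_le _ _
      _ ≤ |ρ| * (B / (1 - |ρ|)) + B := by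
          gcongr
          exact hu _ (by omega)
      _ = B / (1 - |ρ|) := by field_simp; ring

lemma one_sub_mul_sum_arDrift (ρ : ℝ) (u : ℕ → ℝ) (n : ℕ) :
    (1 - ρ) * ∑ t ∈ Icc 1 n, arDrift ρ u t = ∑ t ∈ Icc 1 n, u t - ρ * arDrift ρ u n := by
  induction n with
  | zero => simp
  | succ n ih =>
    rw [sum_Icc_succ_top (by omega), sum_Icc_succ_top (by omega), mul_add, ih, arDrift_succ]
    ring

lemma tendsto_div_natCast_of_abs_le {x : ℕ → ℝ} (hx : ∀ n, |x n| ≤ B) :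
    Tendsto (fun n : ℕ => x n / n) atTop (𝓝 0) :=
  squeeze_zero_norm (fun n => by rw [norm_div, Real.norm_natCast]; gcongr; exact hx n)
    (tendsto_const_div_atTop_nhds_zero_nat B)

lemma tendsto_cesaro_arDrift {L : ℝ} (hρ : |ρ| < 1) (hu : ∀ t, 1 ≤ t → |u t| ≤ B)
    (h : Tendsto (fun n : ℕ => (∑ t ∈ Icc 1 n, u t) / n) atTop (𝓝 L)) :
    Tendsto (fun n : ℕ => (∑ t ∈ Icc 1 n, arDrift ρ u t) / n) atTop (𝓝 (L / (1 - ρ))) := by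
  have hρ1 : 1 - ρ ≠ 0 := by linarith [le_abs_self ρ]
  have hlast := tendsto_div_natCast_of_abs_le (abs_arDrift_le hρ hu)
  have key : ∀ n : ℕ, (∑ t ∈ Icc 1 n, arDrift ρ u t) / n
      = ((∑ t ∈ Icc 1 n, u t) / n - ρ * (arDrift ρ u n / n)) / (1 - ρ) := by
    intro n
    rw [eq_div_iff hρ1, div_mul_eq_mul_div, mul_comm, one_sub_mul_sum_arDrift]
    ring
  simp only [key]
  simpa using (h.sub (hlast.const_mul ρ)).div_const (1 - ρ)

lemma abs_sum_Icc_div_le {f : ℕ → ℝ} (hf : ∀ t, 1 ≤ t → |f t| ≤ B) {m n : ℕ} (hmn : m ≤ n) :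
    |(∑ t ∈ Icc 1 m, f t) / n| ≤ B := by
  have hB : 0 ≤ B := (abs_nonneg _).trans (hf 1 le_rfl)
  rcases Nat.eq_zero_or_pos n with rfl | hn
  · simpa using hB
  rw [abs_div, Nat.abs_cast, div_le_iff₀ (by positivity)]
  calc |∑ t ∈ Icc 1 m, f t| ≤ ∑ t ∈ Icc 1 m, B :=
        (abs_sum_le_sum_abs _ _).trans (sum_le_sum fun t ht => hf t (mem_Icc.1 ht).1)
    _ = m * B := by simp
    _ ≤ B * n := by rw [mul_comm]; gcongr

lemma tendsto_sum_Icc_sub_div {f : ℕ → ℝ} {L : ℝ} (m : ℕ)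
    (h : Tendsto (fun n : ℕ => (∑ t ∈ Icc 1 n, f t) / n) atTop (𝓝 L)) :
    Tendsto (fun n : ℕ => (∑ t ∈ Icc 1 (n - m), f t) / n) atTop (𝓝 L) := by
  have hratio : Tendsto (fun n : ℕ => ((n - m : ℕ) : ℝ) / n) atTop (𝓝 1) := by
    have h1 := (tendsto_const_div_atTop_nhds_zero_nat (m : ℝ)).const_sub 1
    rw [sub_zero] at h1
    refine h1.congr' ?_
    filter_upwards [eventually_gt_atTop m] with n hn
    have : (n : ℝ) ≠ 0 := by norm_cast; omega
    rw [Nat.cast_sub hn.le, sub_div, div_self this]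
  have := (h.comp (tendsto_sub_atTop_nat m)).mul hratio
  rw [mul_one] at this
  refine this.congr' ?_
  filter_upwards [eventually_gt_atTop m] with n hn
  have : ((n - m : ℕ) : ℝ) ≠ 0 := by norm_cast; omega
  simp only [Function.comp_apply]
  field_simp

lemma sum_Icc_sum_Icc_pred_eq_sum_range {M : Type*} [AddCommMonoid M] (F : ℕ → ℕ → M) (n : ℕ) :
    ∑ t ∈ Icc 1 n, ∑ k ∈ Icc 1 (t - 1), F t k
      = ∑ j ∈ range n, ∑ s ∈ Icc 1 (n - (j + 1)), F (s + (j + 1)) s := by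
  rw [sum_sigma', sum_sigma']
  refine sum_bij' (fun x _ => ⟨x.1 - 1 - x.2, x.2⟩) (fun y _ => ⟨y.2 + (y.1 + 1), y.2⟩)
    ?_ ?_ ?_ ?_ ?_
  all_goals
    rintro ⟨a, b⟩ h
    simp only [mem_sigma, mem_Icc, mem_range] at h ⊢
  all_goals first | omega | (congr 1; omega)

lemma sum_arDrift_pred_mul (ρ : ℝ) (u : ℕ → ℝ) (n : ℕ) :
    ∑ t ∈ Icc 1 n, arDrift ρ u (t - 1) * u t
      = ∑ j ∈ range n, ρ ^ j * ∑ s ∈ Icc 1 (n - (j + 1)), u (s + (j + 1)) * u s := by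
  simp only [arDrift, sum_mul, sum_Icc_sum_Icc_pred_eq_sum_range, mul_sum]
  refine sum_congr rfl fun j _ => sum_congr rfl fun s _ => ?_
  rw [show s + (j + 1) - 1 - s = j by omega]
  ring

lemma tendsto_cesaro_arDrift_pred_mul (hρ : |ρ| < 1) (hu : ∀ t, 1 ≤ t → |u t| ≤ B)
    (hlag : ∀ k, 1 ≤ k →
      Tendsto (fun n : ℕ => (∑ t ∈ Icc 1 n, u (t + k) * u t) / n) atTop (𝓝 0)) :
    Tendsto (fun n : ℕ => (∑ t ∈ Icc 1 n, arDrift ρ u (t - 1) * u t) / n) atTop (𝓝 0) := by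
  set g : ℕ → ℕ → ℝ := fun n j =>
    ρ ^ j * ((∑ s ∈ Icc 1 (n - (j + 1)), u (s + (j + 1)) * u s) / n) with hg
  have htsum : ∀ n : ℕ, (∑ t ∈ Icc 1 n, arDrift ρ u (t - 1) * u t) / n = ∑' j, g n j := by
    intro n
    rw [tsum_eq_sum (s := range n) fun j hj => ?_, sum_arDrift_pred_mul, sum_div]
    · exact sum_congr rfl fun j _ => mul_div_assoc _ _ _
    · rw [mem_range, not_lt] at hj
      simp [hg, show n - (j + 1) = 0 by omega]
  have huu : ∀ k t, 1 ≤ t → |u (t + k) * u t| ≤ B ^ 2 := fun k t ht => by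
    rw [abs_mul, sq]
    exact mul_le_mul (hu _ (by omega)) (hu t ht) (abs_nonneg _) ((abs_nonneg _).trans (hu t ht))
  have hbound : ∀ n j, ‖g n j‖ ≤ |ρ| ^ j * B ^ 2 := fun n j => by
    rw [Real.norm_eq_abs, abs_mul, abs_pow]
    gcongr
    exact abs_sum_Icc_div_le (huu (j + 1)) (Nat.sub_le _ _)
  have hlim : ∀ j, Tendsto (fun n => g n j) atTop (𝓝 0) := fun j => by
    simpa using ((tendsto_sum_Icc_sub_div (j + 1) (hlag (j + 1) le_add_self)).const_mul (ρ ^ j))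
  have hsum : Summable fun j => |ρ| ^ j * B ^ 2 :=
    (summable_geometric_of_lt_one (abs_nonneg ρ) hρ).mul_right _
  simpa [htsum] using
    tendsto_tsum_of_dominated_convergence hsum hlim (Eventually.of_forall hbound)

lemma arDrift_sq (ρ : ℝ) (u : ℕ → ℝ) (t : ℕ) :
    arDrift ρ u t ^ 2
      = arDrift (ρ ^ 2) (fun t => 2 * ρ * arDrift ρ u (t - 1) * u t + u t * u t) t :=
  eq_arDrift_of_succ (x := fun t => arDrift ρ u t ^ 2) (by simp)
    (fun t => by simp only [arDrift_succ, Nat.add_sub_cancel]; ring) t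

lemma tendsto_cesaro_arDrift_sq {S : ℝ} (hρ : |ρ| < 1) (hu : ∀ t, 1 ≤ t → |u t| ≤ B)
    (hlag : ∀ k, 1 ≤ k →
      Tendsto (fun n : ℕ => (∑ t ∈ Icc 1 n, u (t + k) * u t) / n) atTop (𝓝 0))
    (hvar : Tendsto (fun n : ℕ => (∑ t ∈ Icc 1 n, u t * u t) / n) atTop (𝓝 S)) :
    Tendsto (fun n : ℕ => (∑ t ∈ Icc 1 n, arDrift ρ u t ^ 2) / n) atTop
      (𝓝 (S / (1 - ρ ^ 2))) := by
  have hρ2 : |ρ ^ 2| < 1 := by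
    rw [abs_pow]; exact pow_lt_one₀ (abs_nonneg ρ) hρ two_ne_zero
  have hw : ∀ t, 1 ≤ t →
      |2 * ρ * arDrift ρ u (t - 1) * u t + u t * u t| ≤ 2 * |ρ| * (B / (1 - |ρ|)) * B + B * B := by
    intro t ht
    have hB : 0 ≤ B := (abs_nonneg _).trans (hu t ht)
    calc _ ≤ |2 * ρ * arDrift ρ u (t - 1) * u t| + |u t * u t| := abs_add_le _ _
      _ ≤ 2 * |ρ| * (B / (1 - |ρ|)) * B + B * B := by
        simp only [abs_mul, abs_two]
        gcongr
        · exact abs_arDrift_le hρ hu (t - 1)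
        all_goals exact hu t ht
  have hmean : Tendsto (fun n : ℕ =>
      (∑ t ∈ Icc 1 n, (2 * ρ * arDrift ρ u (t - 1) * u t + u t * u t)) / n) atTop (𝓝 S) := by
    have := ((tendsto_cesaro_arDrift_pred_mul hρ hu hlag).const_mul (2 * ρ)).add hvar
    rw [mul_zero, zero_add] at this
    refine this.congr fun n => ?_
    simp only [sum_add_distrib, add_div, mul_sum, sum_div, mul_div_assoc, mul_assoc]
  simp only [arDrift_sq]
  exact tendsto_cesaro_arDrift hρ2 hw hmean

end ArDrift

section Projection

variable {p : ℕ} (β : Fin p → ℝ)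

lemma tendsto_cesaro_sum_mul {x : ℕ → Fin p → ℝ} {m : Fin p → ℝ}
    (h : ∀ j, Tendsto (fun n : ℕ => (∑ t ∈ Icc 1 n, x t j) / n) atTop (𝓝 (m j))) :
    Tendsto (fun n : ℕ => (∑ t ∈ Icc 1 n, ∑ j, x t j * β j) / n) atTop
      (𝓝 (∑ j, m j * β j)) := by
  refine (tendsto_finsetSum _ fun j _ => (h j).mul_const (β j)).congr fun n => ?_
  rw [sum_comm, sum_div]
  exact sum_congr rfl fun j _ => by rw [div_mul_eq_mul_div, sum_mul]

lemma tendsto_cesaro_sum_mul_mul_sum_mul {x y : ℕ → Fin p → ℝ} {M : Matrix (Fin p) (Fin p) ℝ}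
    (h : ∀ a b,
      Tendsto (fun n : ℕ => (∑ t ∈ Icc 1 n, x t a * y t b) / n) atTop (𝓝 (M a b))) :
    Tendsto (fun n : ℕ => (∑ t ∈ Icc 1 n, (∑ j, x t j * β j) * ∑ j, y t j * β j) / n) atTop
      (𝓝 (∑ a, ∑ b, β a * M a b * β b)) := by
  refine (tendsto_finsetSum _ fun a _ => tendsto_finsetSum _ fun b _ =>
    ((h a b).const_mul (β a)).mul_const (β b)).congr fun n => ?_
  simp only [sum_div, mul_sum, sum_mul]
  rw [sum_comm]
  conv_rhs => rw [sum_comm]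
  refine sum_congr rfl fun a _ => ?_
  conv_rhs => rw [sum_comm]
  exact sum_congr rfl fun b _ => sum_congr rfl fun t _ => by ring

end Projection

theorem ar1_drift_cesaro_limits_general
    (p : ℕ)
    (z : ℕ → Fin p → ℝ) (β₀ : Fin p → ℝ) (ρ₀ : ℝ) (hρ : |ρ₀| < 1)
    (Sz : Matrix (Fin p) (Fin p) ℝ)
    (C : ℝ)
    (hbd : ∀ t : ℕ, 1 ≤ t → |∑ j, z t j * β₀ j| ≤ C)
    (h2 : ∀ j, Tendsto (fun n : ℕ => (∑ t ∈ Finset.Icc 1 n, z t j) / n)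
      atTop (nhds 0))
    (h3 : ∀ k : ℕ, 1 ≤ k → ∀ a b, Tendsto
      (fun n : ℕ => (∑ t ∈ Finset.Icc 1 n, z (t + k) a * z t b) / n)
      atTop (nhds 0))
    (h4 : ∀ a b, Tendsto
      (fun n : ℕ => (∑ t ∈ Finset.Icc 1 n, z t a * z t b) / n)
      atTop (nhds (Sz a b))) :
    Tendsto (fun n : ℕ =>
        (∑ t ∈ Finset.Icc 1 n, ∑ k ∈ Finset.Icc 1 t,
          ρ₀ ^ (t - k) * ∑ j, z k j * β₀ j) / n) atTop (nhds 0) ∧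
    Tendsto (fun n : ℕ =>
        (∑ t ∈ Finset.Icc 1 n, (∑ k ∈ Finset.Icc 1 t,
          ρ₀ ^ (t - k) * ∑ j, z k j * β₀ j) ^ 2) / n) atTop
      (nhds ((∑ a, ∑ b, β₀ a * Sz a b * β₀ b) / (1 - ρ₀ ^ 2))) := by
  set u : ℕ → ℝ := fun t => ∑ j, z t j * β₀ j
  have hmean : Tendsto (fun n : ℕ => (∑ t ∈ Icc 1 n, u t) / n) atTop (𝓝 0) := by
    simpa using tendsto_cesaro_sum_mul β₀ h2
  have hlag : ∀ k, 1 ≤ k →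
      Tendsto (fun n : ℕ => (∑ t ∈ Icc 1 n, u (t + k) * u t) / n) atTop (𝓝 0) := fun k hk => by
    simpa using tendsto_cesaro_sum_mul_mul_sum_mul (M := 0) β₀ (h3 k hk)
  have hvar : Tendsto (fun n : ℕ => (∑ t ∈ Icc 1 n, u t * u t) / n) atTop
      (𝓝 (∑ a, ∑ b, β₀ a * Sz a b * β₀ b)) :=
    tendsto_cesaro_sum_mul_mul_sum_mul β₀ h4
  have hdrift := tendsto_cesaro_arDrift hρ hbd hmean
  rw [zero_div] at hdrift
  exact ⟨hdrift, tendsto_cesaro_arDrift_sq hρ hbd hlag hvar⟩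

/-- Deterministic Cesàro limits for the AR(1) drift sequence (within Lemma 3). -/
theorem ar1_drift_cesaro_limits
    (p : ℕ) (hp : 1 ≤ p)
    (z : ℕ → Fin p → ℝ) (β₀ : Fin p → ℝ) (ρ₀ : ℝ) (hρ : |ρ₀| < 1)
    (Sz : Matrix (Fin p) (Fin p) ℝ)
    (C : ℝ) (hC : 0 < C)
    (hbd : ∀ t : ℕ, 1 ≤ t → |∑ j, z t j * β₀ j| ≤ C)
    (h2 : ∀ j, Tendsto (fun n : ℕ => (∑ t ∈ Finset.Icc 1 n, z t j) / n)
      atTop (nhds 0))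
    (h3 : ∀ k : ℕ, 1 ≤ k → ∀ a b, Tendsto
      (fun n : ℕ => (∑ t ∈ Finset.Icc 1 n, z (t + k) a * z t b) / n)
      atTop (nhds 0))
    (h4 : ∀ a b, Tendsto
      (fun n : ℕ => (∑ t ∈ Finset.Icc 1 n, z t a * z t b) / n)
      atTop (nhds (Sz a b))) :
    Tendsto (fun n : ℕ =>
        (∑ t ∈ Finset.Icc 1 n, ∑ k ∈ Finset.Icc 1 t,
          ρ₀ ^ (t - k) * ∑ j, z k j * β₀ j) / n) atTop (nhds 0) ∧
    Tendsto (fun n : ℕ =>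
        (∑ t ∈ Finset.Icc 1 n, (∑ k ∈ Finset.Icc 1 t,
          ρ₀ ^ (t - k) * ∑ j, z k j * β₀ j) ^ 2) / n) atTop
      (nhds ((∑ a, ∑ b, β₀ a * Sz a b * β₀ b) / (1 - ρ₀ ^ 2))) :=
  ar1_drift_cesaro_limits_general p z β₀ ρ₀ hρ Sz C hbd h2 h3 h4
end
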